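/- arXiv:0810.2919 — 6 statements merged into one kernel-verified Lean document; each statement's English description precedes it below -/
import Mathlib

section
/- The number of edges in the Hasse diagram of the weight poset of the spin representation of so_{2n} (type D_n, highest weight ϖ_n) equals n·2^{n-3}, for n ≥ 3. -/
open Finset

namespace HalfSpinAux

variable {n : ℕ}

def flip (c : Fin n) (μ : Fin n → Bool) : Fin n → Bool :=
  Function.update μ c (!μ c)

lemma flip_apply_self (c : Fin n) (μ : Fin n → Bool) : flip c μ c = !μ c := by
  simp [flip]

lemma flip_apply_ne (c : Fin n) {i : Fin n} (μ : Fin n → Bool) (h : i ≠ c) :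
    flip c μ i = μ i := by
  simp [flip, Function.update_of_ne h]

lemma flip_flip (c : Fin n) (μ : Fin n → Bool) : flip c (flip c μ) = μ := by
  funext i
  by_cases h : i = c
  · subst h; simp [flip]
  · simp [flip, Function.update_of_ne h]

lemma card_filter_eq_of_flip (c : Fin n) (P Q : (Fin n → Bool) → Prop)
    [DecidablePred P] [DecidablePred Q]
    (hPQ : ∀ μ, P μ → Q (flip c μ)) (hQP : ∀ μ, Q μ → P (flip c μ)) :
    (univ.filter P).card = (univ.filter Q).card := by
  refine Finset.card_bij' (fun μ _ => flip c μ) (fun μ _ => flip c μ) ?_ ?_ ?_ ?_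
  · intro μ hμ
    simp only [mem_filter, mem_univ, true_and] at hμ ⊢
    exact hPQ μ hμ
  · intro μ hμ
    simp only [mem_filter, mem_univ, true_and] at hμ ⊢
    exact hQP μ hμ
  · intro μ _; exact flip_flip c μ
  · intro μ _; exact flip_flip c μ

lemma parity_flip (c : Fin n) (μ : Fin n → Bool) :
    Even ((univ.filter (fun i => flip c μ i = false)).card) ↔
      ¬ Even ((univ.filter (fun i => μ i = false)).card) := by
  rw [Finset.card_filter, Finset.card_filter,
    ← Finset.add_sum_erase _ _ (mem_univ c), ← Finset.add_sum_erase _ _ (mem_univ c)]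
  have hsum : ∑ i ∈ univ.erase c, (if flip c μ i = false then 1 else 0)
      = ∑ i ∈ univ.erase c, (if μ i = false then 1 else 0) := by
    refine Finset.sum_congr rfl (fun i hi => ?_)
    rw [flip_apply_ne c μ (Finset.ne_of_mem_erase hi)]
  rw [hsum, flip_apply_self]
  cases hc : μ c <;> simp [Nat.even_add_one, Nat.even_add]
lemma double (c : Fin n) (P : (Fin n → Bool) → Prop) [DecidablePred P]
    (hP : ∀ μ, P μ → P (flip c μ)) (v : Bool) :
    2 * (univ.filter (fun μ => P μ ∧ μ c = v)).card = (univ.filter P).card := by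
  have h1 : (univ.filter (fun μ => P μ ∧ μ c = v)).card
      = (univ.filter (fun μ => P μ ∧ μ c = !v)).card := by
    refine card_filter_eq_of_flip c _ _ ?_ ?_
    · rintro μ ⟨h, hv⟩
      exact ⟨hP μ h, by rw [flip_apply_self, hv]⟩
    · rintro μ ⟨h, hv⟩
      exact ⟨hP μ h, by rw [flip_apply_self, hv, Bool.not_not]⟩
  have h2 : (univ.filter (fun μ => P μ ∧ μ c = v)).card
      + (univ.filter (fun μ => P μ ∧ μ c = !v)).card = (univ.filter P).card := by
    have h3 := Finset.card_filter_add_card_filter_not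
      (s := (univ : Finset (Fin n → Bool)).filter P) (p := fun μ : Fin n → Bool => μ c = v)
    rw [Finset.filter_filter, Finset.filter_filter] at h3
    rw [← h3]
    congr 2
    ext μ
    cases v <;> simp [mem_filter]
  rw [two_mul]
  nth_rewrite 2 [h1]
  exact h2

lemma count_one (a : Fin n) (va : Bool) :
    (univ.filter (fun μ : Fin n → Bool => μ a = va)).card = 2 ^ (n - 1) := by
  have h := double a (P := fun _ : Fin n → Bool => True) (fun _ _ => trivial) va
  simp only [true_and, Finset.filter_true] at h
  have hcard : (univ : Finset (Fin n → Bool)).card = 2 ^ n := by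
    simp [Fintype.card_fun]
  have hn : 1 ≤ n := a.pos
  have h2 : 2 ^ n = 2 * 2 ^ (n - 1) := by
    rw [← pow_succ', Nat.sub_add_cancel hn]
  rw [hcard, h2] at h
  exact Nat.eq_of_mul_eq_mul_left (by norm_num) h

lemma count_two (hn : 2 ≤ n) (a b : Fin n) (hab : a ≠ b) (va vb : Bool) :
    (univ.filter (fun μ : Fin n → Bool => μ a = va ∧ μ b = vb)).card = 2 ^ (n - 2) := by
  have h := double b (P := fun μ : Fin n → Bool => μ a = va)
    (fun μ h => by show flip b μ a = va; rw [flip_apply_ne b μ hab]; exact h) vb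
  rw [count_one a va] at h
  have h2 : 2 ^ (n - 1) = 2 * 2 ^ (n - 2) := by
    have hh : n - 1 = (n - 2) + 1 := by clear h; omega
    rw [hh, pow_succ']
  rw [h2] at h
  exact Nat.eq_of_mul_eq_mul_left (by norm_num) h

lemma count_pair (hn : 3 ≤ n) (a b : Fin n) (hab : a ≠ b) (va vb : Bool) :
    (univ.filter (fun μ : Fin n → Bool =>
      Even ((univ.filter (fun i => μ i = false)).card) ∧ μ a = va ∧ μ b = vb)).card
      = 2 ^ (n - 3) := by
  obtain ⟨c, hca, hcb⟩ : ∃ c : Fin n, c ≠ a ∧ c ≠ b := by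
    have h : (({a, b} : Finset (Fin n))ᶜ).Nonempty := by
      rw [← Finset.card_pos, Finset.card_compl]
      have h2 := Finset.card_insert_le a ({b} : Finset (Fin n))
      simp only [Finset.card_singleton, Fintype.card_fin] at *
      omega
    obtain ⟨c, hc⟩ := h
    simp only [Finset.mem_compl, Finset.mem_insert, Finset.mem_singleton, not_or] at hc
    exact ⟨c, hc.1, hc.2⟩
  have heq : (univ.filter (fun μ : Fin n → Bool =>
      Even ((univ.filter (fun i => μ i = false)).card) ∧ μ a = va ∧ μ b = vb)).card
      = (univ.filter (fun μ : Fin n → Bool =>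
      ¬ Even ((univ.filter (fun i => μ i = false)).card) ∧ μ a = va ∧ μ b = vb)).card := by
    refine card_filter_eq_of_flip c _ _ ?_ ?_
    · rintro μ ⟨he, ha, hb⟩
      refine ⟨?_, ?_, ?_⟩
      · show ¬ Even ((univ.filter (fun i => flip c μ i = false)).card)
        intro h
        rw [parity_flip] at h
        exact h he
      · show flip c μ a = va
        rw [flip_apply_ne c μ (Ne.symm hca)]; exact ha
      · show flip c μ b = vb
        rw [flip_apply_ne c μ (Ne.symm hcb)]; exact hb
    · rintro μ ⟨he, ha, hb⟩
      refine ⟨?_, ?_, ?_⟩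
      · show Even ((univ.filter (fun i => flip c μ i = false)).card)
        rw [parity_flip]; exact he
      · show flip c μ a = va
        rw [flip_apply_ne c μ (Ne.symm hca)]; exact ha
      · show flip c μ b = vb
        rw [flip_apply_ne c μ (Ne.symm hcb)]; exact hb
  have hsum : (univ.filter (fun μ : Fin n → Bool =>
      Even ((univ.filter (fun i => μ i = false)).card) ∧ μ a = va ∧ μ b = vb)).card
      + (univ.filter (fun μ : Fin n → Bool =>
      ¬ Even ((univ.filter (fun i => μ i = false)).card) ∧ μ a = va ∧ μ b = vb)).card
      = 2 ^ (n - 2) := by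
    rw [← count_two (Nat.le_of_succ_le hn) a b hab va vb]
    have h3 := Finset.card_filter_add_card_filter_not
      (s := (univ : Finset (Fin n → Bool)).filter (fun μ => μ a = va ∧ μ b = vb))
      (p := fun μ : Fin n → Bool => Even ((univ.filter (fun i => μ i = false)).card))
    rw [Finset.filter_filter, Finset.filter_filter] at h3
    rw [← h3]
    congr 2
    · ext μ
      simp only [mem_filter]
      tauto
    · ext μ
      simp only [mem_filter]
      tauto
  have h2 : 2 ^ (n - 2) = 2 * 2 ^ (n - 3) := by
    have hh : n - 2 = (n - 3) + 1 := by clear heq hsum; omega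
    rw [hh, pow_succ']
  rw [h2, heq, ← two_mul] at hsum
  rw [heq]
  exact Nat.eq_of_mul_eq_mul_left (by norm_num) hsum

end HalfSpinAux

/-- The number of edges in the Hasse diagram of the weight poset of the half-spin
representation of `so_{2n}` (type `D_n`, highest weight `ϖ_n`), for `n ≥ 3`, equals
`n·2^{n-3}`.  Weights are sign vectors `μ : Fin n → Bool` (`true` = `+`) with an even
number of minus signs, representing `(±ε₁ ± ⋯ ± εₙ)/2`.  An edge out of `μ` of type
`αᵢ = εᵢ − εᵢ₊₁` (for `i < n-1`) requires `μᵢ = +`, `μᵢ₊₁ = −`; an edge of type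
`αₙ = εₙ₋₁ + εₙ` requires `μₙ₋₁ = μₙ = +`. -/
theorem numEdges_halfspin_typeD (n : ℕ) (hn : 3 ≤ n) :
    (((Finset.univ : Finset (Fin n → Bool)).filter
        (fun μ => Even ((Finset.univ.filter (fun i => μ i = false)).card)) ×ˢ
      (Finset.univ : Finset (Fin n))).filter
      (fun p =>
        (p.2.val + 1 < n ∧ p.1 p.2 = true ∧
          p.1 ⟨min (p.2.val + 1) (n - 1), by omega⟩ = false) ∨
        (p.2.val + 1 = n ∧ p.1 ⟨n - 2, by omega⟩ = true ∧
          p.1 ⟨n - 1, by omega⟩ = true))).card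
    = n * 2 ^ (n - 3) := by
  classical
  rw [Finset.card_eq_sum_card_fiberwise
    (f := Prod.snd) (t := (Finset.univ : Finset (Fin n))) (fun x _ => Finset.mem_univ _)]
  have hterm : ∀ i ∈ (Finset.univ : Finset (Fin n)),
      ((((Finset.univ : Finset (Fin n → Bool)).filter
        (fun μ => Even ((Finset.univ.filter (fun i => μ i = false)).card)) ×ˢ
      (Finset.univ : Finset (Fin n))).filter
      (fun p =>
        (p.2.val + 1 < n ∧ p.1 p.2 = true ∧
          p.1 ⟨min (p.2.val + 1) (n - 1), by omega⟩ = false) ∨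
        (p.2.val + 1 = n ∧ p.1 ⟨n - 2, by omega⟩ = true ∧
          p.1 ⟨n - 1, by omega⟩ = true))).filter (fun p => p.2 = i)).card
      = 2 ^ (n - 3) := by
    intro i _
    by_cases hi : (i : ℕ) + 1 < n
    · -- edge of type α_i
      have hmin : (⟨min ((i : ℕ) + 1) (n - 1), by omega⟩ : Fin n)
          = ⟨(i : ℕ) + 1, by omega⟩ := by
        ext
        simp only
        omega
      rw [← HalfSpinAux.count_pair hn i ⟨(i : ℕ) + 1, by omega⟩
        (by intro h; have := congrArg Fin.val h; simp at this) true false]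
      refine Finset.card_bij' (fun p _ => p.1) (fun μ _ => (μ, i)) ?_ ?_ ?_ ?_
      · intro p hp
        simp only [Finset.mem_filter, Finset.mem_product, Finset.mem_univ, true_and,
          and_true] at hp ⊢
        obtain ⟨⟨hev, hcond⟩, hpi⟩ := hp
        refine ⟨hev, ?_⟩
        subst hpi
        rcases hcond with ⟨_, h1, h2⟩ | ⟨h1, _, _⟩
        · rw [hmin] at h2
          exact ⟨h1, h2⟩
        · omega
      · intro μ hμ
        simp only [Finset.mem_filter, Finset.mem_univ, true_and, and_true] at hμ
        obtain ⟨hev, h1, h2⟩ := hμ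
        refine Finset.mem_filter.mpr ⟨Finset.mem_filter.mpr
          ⟨Finset.mem_product.mpr ⟨Finset.mem_filter.mpr ⟨Finset.mem_univ _, hev⟩,
            Finset.mem_univ _⟩, ?_⟩, rfl⟩
        left
        rw [hmin]
        exact ⟨hi, h1, h2⟩
      · intro p hp
        simp only [Finset.mem_filter] at hp
        exact Prod.ext rfl hp.2.symm
      · intro μ _
        rfl
    · -- edge of type α_n
      have hin : (i : ℕ) + 1 = n := by have := i.isLt; omega
      have hne : (⟨n - 2, by omega⟩ : Fin n) ≠ ⟨n - 1, by omega⟩ := by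
        intro h
        have := congrArg Fin.val h
        simp only at this
        omega
      rw [← HalfSpinAux.count_pair hn ⟨n - 2, by omega⟩ ⟨n - 1, by omega⟩ hne true true]
      refine Finset.card_bij' (fun p _ => p.1) (fun μ _ => (μ, i)) ?_ ?_ ?_ ?_
      · intro p hp
        simp only [Finset.mem_filter, Finset.mem_product, Finset.mem_univ, true_and,
          and_true] at hp ⊢
        obtain ⟨⟨hev, hcond⟩, hpi⟩ := hp
        refine ⟨hev, ?_⟩
        subst hpi
        rcases hcond with ⟨h0, _, _⟩ | ⟨_, h1, h2⟩
        · omega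
        · exact ⟨h1, h2⟩
      · intro μ hμ
        simp only [Finset.mem_filter, Finset.mem_univ, true_and, and_true] at hμ
        obtain ⟨hev, h1, h2⟩ := hμ
        exact Finset.mem_filter.mpr ⟨Finset.mem_filter.mpr
          ⟨Finset.mem_product.mpr ⟨Finset.mem_filter.mpr ⟨Finset.mem_univ _, hev⟩,
            Finset.mem_univ _⟩, Or.inr ⟨hin, h1, h2⟩⟩, rfl⟩
      · intro p hp
        simp only [Finset.mem_filter] at hp
        exact Prod.ext rfl hp.2.symm
      · intro μ _
        rfl
  rw [Finset.sum_congr rfl hterm, Finset.sum_const, Finset.card_univ, Fintype.card_fin,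
    smul_eq_mul]
end

section
/- For finite posets P' and P'' with upper covering polynomials K_{P'}(t) and K_{P''}(t), the upper covering polynomial of the product poset P'×P'' satisfies K_{P'×P''}(t) = K_{P'}(t)·K_{P''}(t). -/
/-- The upper covering polynomial of a finite poset `P`:
`K_P(t) = Σ_j |P^{(j)}| t^j`, where `P^{(j)}` is the set of elements of `P` covering
exactly `j` elements. -/
noncomputable def upperCoveringPolynomial (P : Type*) [PartialOrder P] [Fintype P] :
    Polynomial ℤ :=
  ∑ j ∈ Finset.range (Fintype.card P + 1),
    Polynomial.C ((Nat.card {a : P // Nat.card {b : P // b ⋖ a} = j} : ℕ) : ℤ) *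
      Polynomial.X ^ j


/-- Number of elements covered by `a`. -/
noncomputable def covCard {P : Type*} [PartialOrder P] (a : P) : ℕ :=
  Nat.card {b : P // b ⋖ a}

lemma covCard_prod {P' P'' : Type*} [PartialOrder P'] [PartialOrder P'']
    [Finite P'] [Finite P''] (a : P' × P'') :
    covCard a = covCard a.1 + covCard a.2 := by
  classical
  have e : {b : P' × P'' // b ⋖ a} ≃ {b : P' // b ⋖ a.1} ⊕ {b : P'' // b ⋖ a.2} := by
    refine
      { toFun := fun ⟨b, hb⟩ =>
          if h : b.1 ⋖ a.1 then Sum.inl ⟨b.1, h⟩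
          else Sum.inr ⟨b.2, ((Prod.covBy_iff.1 hb).resolve_left (fun hc => h hc.1)).1⟩
        invFun := fun s => s.elim
          (fun ⟨b₁, h⟩ => ⟨(b₁, a.2), Prod.covBy_iff.2 (Or.inl ⟨h, rfl⟩)⟩)
          (fun ⟨b₂, h⟩ => ⟨(a.1, b₂), Prod.covBy_iff.2 (Or.inr ⟨h, rfl⟩)⟩)
        left_inv := ?_
        right_inv := ?_ }
    · rintro ⟨b, hb⟩
      rcases Prod.covBy_iff.1 hb with ⟨h1, h2⟩ | ⟨h1, h2⟩
      · simp only [dif_pos h1]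
        exact Subtype.ext (Prod.ext rfl h2.symm)
      · have : ¬ b.1 ⋖ a.1 := by rw [h2]; exact fun hc => hc.lt.false
        simp only [dif_neg this]
        exact Subtype.ext (Prod.ext h2.symm rfl)
    · rintro (⟨b₁, h⟩ | ⟨b₂, h⟩)
      · simp [h]
      · have : ¬ a.1 ⋖ a.1 := fun hc => hc.lt.false
        simp [this]
  simp only [covCard, Nat.card_congr e]
  exact Nat.card_sum

lemma upperCoveringPolynomial_eq (P : Type*) [PartialOrder P] [Fintype P] :
    upperCoveringPolynomial P = ∑ a : P, (Polynomial.X : Polynomial ℤ) ^ covCard a := by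
  classical
  have hmaps : ∀ a ∈ Finset.univ (α := P), covCard a ∈ Finset.range (Fintype.card P + 1) := by
    intro a _
    have : covCard a ≤ Fintype.card P := by
      rw [covCard, Nat.card_eq_fintype_card]
      exact Fintype.card_subtype_le _
    simpa [Nat.lt_succ_iff] using this
  rw [← Finset.sum_fiberwise_of_maps_to hmaps
    (fun a => (Polynomial.X : Polynomial ℤ) ^ covCard a)]
  unfold upperCoveringPolynomial
  refine Finset.sum_congr rfl fun j _ => ?_
  rw [Finset.sum_congr rfl (fun a ha => by
    rw [(Finset.mem_filter.1 ha).2]), Finset.sum_const]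
  have : Nat.card {a : P // Nat.card {b : P // b ⋖ a} = j} =
      (Finset.univ.filter (fun a : P => covCard a = j)).card := by
    rw [Nat.card_eq_fintype_card, Fintype.card_subtype]
    rfl
  rw [this, nsmul_eq_mul]
  simp

/-- For finite posets `P'` and `P''`, the upper covering polynomial of the product
poset `P' × P''` (ordered componentwise) is the product of the upper covering
polynomials: `K_{P'×P''}(t) = K_{P'}(t)·K_{P''}(t)`. -/
theorem upperCoveringPolynomial_prod (P' P'' : Type*) [PartialOrder P'] [PartialOrder P'']
    [Fintype P'] [Fintype P''] :
    upperCoveringPolynomial (P' × P'') =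
      upperCoveringPolynomial P' * upperCoveringPolynomial P'' := by
  rw [upperCoveringPolynomial_eq, upperCoveringPolynomial_eq, upperCoveringPolynomial_eq,
    Finset.sum_mul_sum, Fintype.sum_prod_type]
  refine Finset.sum_congr rfl fun a _ => Finset.sum_congr rfl fun b _ => ?_
  rw [covCard_prod, pow_add]
end

section
/- In the weight poset of the spin representation of so_{2n+1} (type B_n), the number of weights that cover exactly r other weights equals C(n+1, 2r); hence the upper covering polynomial is Σ_{r≥0} C(n+1,2r) t^r. -/
def statF : ∀ {n : ℕ}, (Fin n → Bool) → ℕ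
  | 0, _ => 0
  | 1, μ => if μ 0 = true then 1 else 0
  | _+2, μ => (if μ 0 = true ∧ μ 1 = false then 1 else 0) + statF (Fin.tail μ)

lemma statF_cons_false {n} (μ : Fin n → Bool) :
    statF (Fin.cons false μ) = statF μ := by
  cases n with
  | zero => simp [statF]
  | succ m => simp [statF, Fin.tail_cons]

lemma statF_cons_true_zero (μ : Fin 0 → Bool) : statF (Fin.cons true μ) = 1 := by
  simp [statF]

lemma statF_cons_true_cons_true {n} (μ : Fin n → Bool) :
    statF (Fin.cons true (Fin.cons true μ)) = statF (Fin.cons true μ) := by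
  simp [statF, Fin.tail_cons]

lemma statF_cons_true_cons_false {n} (μ : Fin n → Bool) :
    statF (Fin.cons true (Fin.cons false μ)) = 1 + statF μ := by
  simp [statF, Fin.tail_cons, statF_cons_false]

lemma card_filter_cons (n : ℕ) (p : (Fin (n+1) → Bool) → Prop) [DecidablePred p] :
    (Finset.univ.filter p).card
      = (Finset.univ.filter fun μ : Fin n → Bool => p (Fin.cons true μ)).card
      + (Finset.univ.filter fun μ : Fin n → Bool => p (Fin.cons false μ)).card := by
  classical
  rw [Finset.card_filter, Finset.card_filter, Finset.card_filter]
  rw [← Equiv.sum_comp (Fin.consEquiv (fun _ => Bool)) (fun μ => if p μ then 1 else 0)]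
  rw [Fintype.sum_prod_type, Fintype.sum_bool]
  rfl

lemma filter_card_eq_statF : ∀ (n : ℕ) (μ : Fin n → Bool),
    (Finset.univ.filter (fun i : Fin n =>
      (i.val + 1 < n ∧ μ i = true ∧
        μ ⟨min (i.val + 1) (n - 1), by omega⟩ = false) ∨
      (i.val + 1 = n ∧ μ i = true))).card = statF μ
  | 0, μ => by simp [statF]
  | 1, μ => by
    rw [Finset.card_filter, Fin.sum_univ_one]
    simp [statF]
  | (n+2), μ => by
    rw [Finset.card_filter, Fin.sum_univ_succ]
    have h0 : min (0+1) (n+2-1) = 1 := by omega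
    have e1 : (⟨min (0+1) (n+2-1), by omega⟩ : Fin (n+2)) = 1 := by
      apply Fin.ext; simp [h0]
    have htail := filter_card_eq_statF (n+1) (Fin.tail μ)
    rw [Finset.card_filter] at htail
    have hsum : (∑ i : Fin (n+1),
        if ((i.succ.val + 1 < n+2 ∧ μ i.succ = true ∧
            μ ⟨min (i.succ.val + 1) (n+2-1), by omega⟩ = false) ∨
          (i.succ.val + 1 = n+2 ∧ μ i.succ = true)) then 1 else 0)
        = statF (Fin.tail μ) := by
      refine Eq.trans ?_ htail
      apply Finset.sum_congr rfl
      intro i _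
      apply if_congr _ rfl rfl
      have hidx : (⟨min (i.succ.val + 1) (n+2-1), by omega⟩ : Fin (n+2))
          = Fin.succ ⟨min (i.val + 1) (n+1-1), by omega⟩ := by
        apply Fin.ext
        simp [Fin.val_succ]
      constructor
      · rintro (⟨h1, h2, h3⟩ | ⟨h1, h2⟩)
        · left
          refine ⟨by simp [Fin.val_succ] at h1; omega, h2, ?_⟩
          rwa [hidx] at h3
        · right
          exact ⟨by simp [Fin.val_succ] at h1; omega, h2⟩
      · rintro (⟨h1, h2, h3⟩ | ⟨h1, h2⟩)
        · left
          refine ⟨by simp [Fin.val_succ]; omega, h2, ?_⟩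
          rwa [hidx]
        · right
          exact ⟨by simp [Fin.val_succ]; omega, h2⟩
    rw [hsum]
    show (if _ then 1 else 0) + _ = statF μ
    rw [statF]
    congr 1
    apply if_congr _ rfl rfl
    have e1' : (⟨(((0:Fin (n+2)).val) + 1) ⊓ (n + 2 - 1), by omega⟩ : Fin (n+2)) = 1 := by
      apply Fin.ext
      simp
    rw [e1']
    simp

lemma countAB (n : ℕ) :
    (∀ r, (Finset.univ.filter fun μ : Fin n → Bool => statF μ = r).card
        = (n+1).choose (2*r)) ∧
    ((Finset.univ.filter fun μ : Fin n → Bool => statF (Fin.cons true μ) = 0).card = 0) ∧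
    (∀ s, (Finset.univ.filter fun μ : Fin n → Bool => statF (Fin.cons true μ) = s+1).card
        = (n+1).choose (2*s+1)) := by
  induction n with
  | zero =>
    refine ⟨fun r => ?_, ?_, fun s => ?_⟩
    · cases r with
      | zero => simp [statF]
      | succ t => simp [statF, Nat.choose_eq_zero_of_lt (by omega : 1 < 2*(t+1))]
    · simp [statF_cons_true_zero]
    · cases s with
      | zero => simp [statF_cons_true_zero]
      | succ t => simp [statF_cons_true_zero, Nat.choose_eq_zero_of_lt (by omega : 1 < 2*(t+1)+1)]
  | succ m ih =>
    obtain ⟨ihA, ihB0, ihB⟩ := ih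
    have hA : ∀ r, (Finset.univ.filter fun μ : Fin (m+1) → Bool => statF μ = r).card
        = (m+2).choose (2*r) := by
      intro r
      rw [card_filter_cons m (fun μ => statF μ = r)]
      simp only [statF_cons_false]
      cases r with
      | zero => rw [ihB0, ihA 0]; simp
      | succ s =>
        rw [ihB s, ihA (s+1)]
        have h : 2*(s+1) = (2*s+1)+1 := by ring
        rw [h]
        conv_rhs => rw [Nat.choose_succ_succ' (m+1) (2*s+1)]
    refine ⟨hA, ?_, fun s => ?_⟩
    · rw [card_filter_cons m (fun μ => statF (Fin.cons true μ) = 0)]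
      simp only [statF_cons_true_cons_true, statF_cons_true_cons_false]
      rw [ihB0]
      simp
    · rw [card_filter_cons m (fun μ => statF (Fin.cons true μ) = s+1)]
      simp only [statF_cons_true_cons_true, statF_cons_true_cons_false]
      have h2 : (Finset.univ.filter fun μ : Fin m → Bool => 1 + statF μ = s+1).card
          = (m+1).choose (2*s) := by
        have h : (Finset.univ.filter fun μ : Fin m → Bool => 1 + statF μ = s+1)
            = (Finset.univ.filter fun μ : Fin m → Bool => statF μ = s) :=
          Finset.filter_congr (fun μ _ => by omega)
        rw [h, ihA s]
      rw [h2, ihB s]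
      rw [Nat.choose_succ_succ' (m+1) (2*s)]
      omega

/-- In the weight poset of the spin representation of `so_{2n+1}` (type `B_n`), whose
weights are all sign vectors `μ : Fin n → Bool` (`true` = `+`), `μ` covers `μ − αᵢ`
(for `i < n`, `αᵢ = εᵢ − εᵢ₊₁`) iff `μᵢ = +` and `μᵢ₊₁ = −`, and `μ` covers `μ − αₙ`
(`αₙ = εₙ`) iff `μₙ = +`.  The number of weights covering exactly `r` other weights
equals `C(n+1, 2r)`; hence the upper covering polynomial is `Σ_r C(n+1,2r) tʳ`. -/
theorem coveringCount_spin_typeB (n : ℕ) (hn : 1 ≤ n) (r : ℕ) :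
    ((Finset.univ : Finset (Fin n → Bool)).filter
      (fun μ =>
        (Finset.univ.filter (fun i : Fin n =>
          (i.val + 1 < n ∧ μ i = true ∧
            μ ⟨min (i.val + 1) (n - 1), by omega⟩ = false) ∨
          (i.val + 1 = n ∧ μ i = true))).card = r)).card
    = Nat.choose (n + 1) (2 * r) := by
  have h : ((Finset.univ : Finset (Fin n → Bool)).filter
      (fun μ =>
        (Finset.univ.filter (fun i : Fin n =>
          (i.val + 1 < n ∧ μ i = true ∧
            μ ⟨min (i.val + 1) (n - 1), by omega⟩ = false) ∨
          (i.val + 1 = n ∧ μ i = true))).card = r))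
      = ((Finset.univ : Finset (Fin n → Bool)).filter (fun μ => statF μ = r)) := by
    apply Finset.filter_congr
    intro μ _
    rw [filter_card_eq_statF n μ]
  rw [h, (countAB n).1 r]
end

section
/- Let g be a simply-laced simple Lie algebra with a standard Z-grading g = ⊕_i g(i) determined by coloring a subset Π(1) of k simple roots (a root α lies in g(i) iff the sum of its coefficients on Π(1) equals i). Then Σ_{i≥1} (2·dim g(i) − #E(i)) = k·h, where h is the Coxeter number of g and E(i) is the set of covering pairs in the weight poset Δ(i) of g(i) under the root order of the subalgebra g(0). -/
open scoped Classical

set_option linter.unusedSectionVars false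
set_option maxHeartbeats 1000000

/-- A (reduced, crystallographic) simple root system of rank `n`, realized in `ℝ^n`
with the standard inner product `Σ αₜβₜ`, together with a choice of base (simple
roots) `sroot`.  `base` says every root is a nonnegative or nonpositive integer
combination of the simple roots, and `irreducible` says the Dynkin diagram is
connected (so the corresponding semisimple Lie algebra is simple). -/
structure SimpleRootSystem (n : ℕ) where
  Δ : Finset (Fin n → ℝ)
  sroot : Fin n → Fin n → ℝ
  sroot_mem : ∀ i, sroot i ∈ Δ
  sroot_indep : LinearIndependent ℝ sroot
  nonzero : ∀ α ∈ Δ, α ≠ (0 : Fin n → ℝ)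
  reflect : ∀ α ∈ Δ, ∀ β ∈ Δ,
    β - ((2 * (∑ t, α t * β t) / (∑ t, α t * α t)) • α) ∈ Δ
  integral : ∀ α ∈ Δ, ∀ β ∈ Δ,
    ∃ z : ℤ, (z : ℝ) * (∑ t, α t * α t) = 2 * (∑ t, α t * β t)
  reduced : ∀ α ∈ Δ, ∀ c : ℝ, c • α ∈ Δ → c = 1 ∨ c = -1
  base : ∀ α ∈ Δ, (∃ c : Fin n → ℕ, α = ∑ i, (c i : ℝ) • sroot i) ∨
      (∃ c : Fin n → ℕ, α = -(∑ i, (c i : ℝ) • sroot i))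
  irreducible : ∀ s : Finset (Fin n),
      (∀ i ∈ s, ∀ j ∉ s, (∑ t, sroot i t * sroot j t) = 0) → s = ∅ ∨ s = Finset.univ

/-- The set of roots of degree `d` for the standard `ℤ`-grading determined by the
colored set `s` of simple roots: the roots `γ = Σ cᵢ αᵢ` with `cᵢ ∈ ℕ` and
`Σ_{i ∈ s} cᵢ = d`.  For `d ≥ 1` this is the weight poset `Δ(d)` of the
`g(0)`-module `g(d)`. -/
noncomputable def graded {n : ℕ} (R : SimpleRootSystem n) (s : Finset (Fin n)) (d : ℕ) :
    Finset (Fin n → ℝ) :=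
  R.Δ.filter (fun γ => ∃ c : Fin n → ℕ,
    γ = ∑ i, (c i : ℝ) • R.sroot i ∧ ∑ i ∈ s, c i = d)

/-- The Hasse edges of the weight poset `Δ(d)`: pairs `(μ, i)` with `μ ∈ Δ(d)`,
`αᵢ` an uncolored simple root (a simple root of `g(0)`), and `μ − αᵢ ∈ Δ(d)`;
i.e. the covering pairs for the root order of `g(0)`. -/
noncomputable def gradedEdges {n : ℕ} (R : SimpleRootSystem n) (s : Finset (Fin n))
    (d : ℕ) : Finset ((Fin n → ℝ) × Fin n) :=
  (graded R s d ×ˢ sᶜ).filter (fun p => p.1 - R.sroot p.2 ∈ graded R s d)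

namespace SRS

open Matrix Finset

variable {n : ℕ} (R : SimpleRootSystem n)

lemma dp_sum (x y : Fin n → ℝ) : (∑ t, x t * y t) = x ⬝ᵥ y := rfl

variable {R}

lemma dp_ne_zero {γ : Fin n → ℝ} (h : γ ∈ R.Δ) : γ ⬝ᵥ γ ≠ 0 :=
  fun hc => R.nonzero γ h (dotProduct_self_eq_zero.mp hc)

lemma reflect_mem {β γ : Fin n → ℝ} (hβ : β ∈ R.Δ) (hγ : γ ∈ R.Δ) :
    γ - ((2 * (β ⬝ᵥ γ) / (β ⬝ᵥ β)) • β) ∈ R.Δ :=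
  R.reflect β hβ γ hγ

lemma neg_mem {γ : Fin n → ℝ} (h : γ ∈ R.Δ) : -γ ∈ R.Δ := by
  have h0 : γ ⬝ᵥ γ ≠ 0 := dp_ne_zero h
  have h2 := reflect_mem h h
  have : (2 * (γ ⬝ᵥ γ) / (γ ⬝ᵥ γ)) = 2 := by field_simp
  rw [this] at h2
  have : γ - (2 : ℝ) • γ = -γ := by
    funext t; simp [Pi.smul_apply]; ring
  rwa [this] at h2

section Norm

variable {ℓ : ℝ} (hℓ : 0 < ℓ) (hnorm : ∀ γ ∈ R.Δ, γ ⬝ᵥ γ = ℓ)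

include hℓ hnorm

lemma pair_cases {γ β : Fin n → ℝ} (hγ : γ ∈ R.Δ) (hβ : β ∈ R.Δ)
    (h1 : γ ≠ β) (h2 : γ ≠ -β) :
    2 * (γ ⬝ᵥ β) = ℓ ∨ 2 * (γ ⬝ᵥ β) = 0 ∨ 2 * (γ ⬝ᵥ β) = -ℓ := by
  obtain ⟨z, hz⟩ := R.integral γ hγ β hβ
  rw [dp_sum, dp_sum, hnorm γ hγ] at hz
  have hcs : (γ ⬝ᵥ β) ^ 2 ≤ ℓ ^ 2 := by
    have := Finset.sum_mul_sq_le_sq_mul_sq Finset.univ γ β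
    have e1 : (∑ t, γ t ^ 2) = ℓ := by
      rw [← hnorm γ hγ]; simp [dotProduct, sq]
    have e2 : (∑ t, β t ^ 2) = ℓ := by
      rw [← hnorm β hβ]; simp [dotProduct, sq]
    rw [e1, e2] at this
    calc (γ ⬝ᵥ β) ^ 2 = (∑ t, γ t * β t) ^ 2 := rfl
      _ ≤ ℓ * ℓ := this
      _ = ℓ ^ 2 := (sq ℓ).symm
  have hz2 : (z : ℝ) ^ 2 ≤ 4 := by
    have h4 : ((z : ℝ) * ℓ) ^ 2 ≤ 4 * ℓ ^ 2 := by rw [hz]; nlinarith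
    nlinarith [mul_pos hℓ hℓ, sq_nonneg ((z:ℝ))]
  have hz2' : (z : ℤ) ^ 2 ≤ 4 := by exact_mod_cast (by push_cast; exact hz2 : ((z ^ 2 : ℤ) : ℝ) ≤ 4)
  have hl : -2 ≤ z := by nlinarith
  have hu : z ≤ 2 := by nlinarith
  have exp_sub : (γ - β) ⬝ᵥ (γ - β) = γ ⬝ᵥ γ - 2 * (γ ⬝ᵥ β) + β ⬝ᵥ β := by
    simp [sub_dotProduct, dotProduct_sub, dotProduct_comm β γ]; ring
  have exp_add : (γ + β) ⬝ᵥ (γ + β) = γ ⬝ᵥ γ + 2 * (γ ⬝ᵥ β) + β ⬝ᵥ β := by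
    simp [add_dotProduct, dotProduct_add, dotProduct_comm β γ]; ring
  have hzb : z = -2 ∨ z = -1 ∨ z = 0 ∨ z = 1 ∨ z = 2 := by omega
  rcases hzb with h | h | h | h | h
  · exfalso; apply h2
    have hzz : 2 * (γ ⬝ᵥ β) = -(2 * ℓ) := by rw [← hz, h]; push_cast; ring
    have hz0 : (γ + β) ⬝ᵥ (γ + β) = 0 := by
      rw [exp_add, hnorm γ hγ, hnorm β hβ, hzz]; ring
    have := dotProduct_self_eq_zero.mp hz0
    funext t; have := congrFun this t; simp at this ⊢; linarith
  · right; right; rw [← hz, h]; push_cast; ring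
  · right; left; rw [← hz, h]; push_cast; ring
  · left; rw [← hz, h]; push_cast; ring
  · exfalso; apply h1
    have hzz : 2 * (γ ⬝ᵥ β) = 2 * ℓ := by rw [← hz, h]; push_cast; ring
    have hz0 : (γ - β) ⬝ᵥ (γ - β) = 0 := by
      rw [exp_sub, hnorm γ hγ, hnorm β hβ, hzz]; ring
    have := dotProduct_self_eq_zero.mp hz0
    funext t; have := congrFun this t; simp at this ⊢; linarith

lemma add_mem' {γ β : Fin n → ℝ} (hγ : γ ∈ R.Δ) (hβ : β ∈ R.Δ)
    (h : 2 * (β ⬝ᵥ γ) = -ℓ) : γ + β ∈ R.Δ := by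
  have h2 := reflect_mem hβ hγ
  rw [hnorm β hβ, h] at h2
  have : (-ℓ / ℓ) = -1 := by field_simp
  rw [this] at h2
  have e : γ - (-1 : ℝ) • β = γ + β := by
    funext t; simp
  rwa [e] at h2

lemma sub_mem' {γ β : Fin n → ℝ} (hγ : γ ∈ R.Δ) (hβ : β ∈ R.Δ)
    (h : 2 * (β ⬝ᵥ γ) = ℓ) : γ - β ∈ R.Δ := by
  have h2 := reflect_mem hβ hγ
  rw [hnorm β hβ, h] at h2
  have : (ℓ / ℓ) = 1 := by field_simp
  rw [this] at h2
  have e : γ - (1 : ℝ) • β = γ - β := by funext t; simp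
  rwa [e] at h2

lemma chain_pair {μ α : Fin n → ℝ} (hμ : μ ∈ R.Δ) (hα : α ∈ R.Δ)
    (hs : μ - α ∈ R.Δ) : 2 * ((μ - α) ⬝ᵥ α) = -ℓ := by
  have e1 := hnorm μ hμ
  have e2 := hnorm α hα
  have e3 := hnorm _ hs
  have exp1 : (μ - α) ⬝ᵥ (μ - α) = μ ⬝ᵥ μ - 2 * (μ ⬝ᵥ α) + α ⬝ᵥ α := by
    simp [sub_dotProduct, dotProduct_sub, dotProduct_comm α μ]; ring
  have exp2 : (μ - α) ⬝ᵥ α = μ ⬝ᵥ α - α ⬝ᵥ α := by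
    simp [sub_dotProduct]
  rw [e1, e2] at exp1
  rw [exp1] at e3
  rw [exp2, e2]
  linarith

end Norm

section Coord

variable (R) (hn : 0 < n)

noncomputable def sb : Module.Basis (Fin n) ℝ (Fin n → ℝ) :=
  haveI : Nonempty (Fin n) := ⟨⟨0, hn⟩⟩
  basisOfLinearIndependentOfCardEqFinrank R.sroot_indep
    (by simp [Module.finrank_fintype_fun_eq_card])

lemma sb_apply (i : Fin n) : sb R hn i = R.sroot i := by
  haveI : Nonempty (Fin n) := ⟨⟨0, hn⟩⟩
  rw [sb]
  exact congrFun (coe_basisOfLinearIndependentOfCardEqFinrank _ _) i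

noncomputable def crd (x : Fin n → ℝ) (i : Fin n) : ℝ := (sb R hn).repr x i

lemma crd_sum (x : Fin n → ℝ) : x = ∑ i, crd R hn x i • R.sroot i := by
  conv_lhs => rw [← (sb R hn).sum_repr x]
  refine Finset.sum_congr rfl fun i _ => ?_
  rw [crd, sb_apply]

lemma crd_rep {x : Fin n → ℝ} {c : Fin n → ℝ} (h : x = ∑ i, c i • R.sroot i) (i : Fin n) :
    crd R hn x i = c i := by
  have : x = ∑ i, c i • (sb R hn) i := by
    rw [h]; exact Finset.sum_congr rfl fun i _ => by rw [sb_apply]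
  rw [crd, this, Module.Basis.repr_sum_self]

lemma crd_sroot (j i : Fin n) : crd R hn (R.sroot j) i = if j = i then 1 else 0 := by
  have : R.sroot j = ∑ i, (if j = i then (1:ℝ) else 0) • R.sroot i := by
    simp [ite_smul]
  rw [crd_rep R hn this i]

lemma crd_add (x y : Fin n → ℝ) (i : Fin n) :
    crd R hn (x + y) i = crd R hn x i + crd R hn y i := by
  simp [crd]

lemma crd_sub (x y : Fin n → ℝ) (i : Fin n) :
    crd R hn (x - y) i = crd R hn x i - crd R hn y i := by
  simp [crd]

lemma crd_neg (x : Fin n → ℝ) (i : Fin n) : crd R hn (-x) i = -crd R hn x i := by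
  simp [crd]

lemma crd_smul (c : ℝ) (x : Fin n → ℝ) (i : Fin n) :
    crd R hn (c • x) i = c * crd R hn x i := by
  simp [crd]

/-- dual vectors: `x ⬝ᵥ du j = crd x j`. -/
noncomputable def du (j : Fin n) : Fin n → ℝ := fun t => crd R hn (Pi.single t 1) j

lemma dp_du (x : Fin n → ℝ) (j : Fin n) : x ⬝ᵥ du R hn j = crd R hn x j := by
  have hx : x = ∑ t, x t • (Pi.single t (1:ℝ) : Fin n → ℝ) := by
    funext u
    rw [Finset.sum_apply]
    simp [Pi.single_apply, mul_comm]
  calc x ⬝ᵥ du R hn j = ∑ t, x t * crd R hn (Pi.single t 1) j := rfl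
    _ = ∑ t, crd R hn (x t • (Pi.single t (1:ℝ) : Fin n → ℝ)) j := by
        refine Finset.sum_congr rfl fun t _ => (crd_smul R hn _ _ _).symm
    _ = crd R hn (∑ t, x t • (Pi.single t (1:ℝ) : Fin n → ℝ)) j := by
        rw [eq_comm]
        simp only [crd, map_sum, Finsupp.coe_finset_sum, Finset.sum_apply]
    _ = crd R hn x j := by rw [← hx]

end Coord

section Pos

variable (R)

/-- The positive roots. -/
noncomputable def Pos : Finset (Fin n → ℝ) :=
  R.Δ.filter (fun γ => ∃ c : Fin n → ℕ, γ = ∑ i, (c i : ℝ) • R.sroot i)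

variable {R}

lemma Pos_subset : Pos R ⊆ R.Δ := Finset.filter_subset _ _

lemma mem_Pos {γ : Fin n → ℝ} :
    γ ∈ Pos R ↔ γ ∈ R.Δ ∧ ∃ c : Fin n → ℕ, γ = ∑ i, (c i : ℝ) • R.sroot i := by
  simp [Pos]

variable (hn : 0 < n)

include hn

variable (R) in
/-- natural coordinates of a positive root -/
noncomputable def crdn (γ : Fin n → ℝ) (i : Fin n) : ℕ := ⌊crd R hn γ i⌋₊

lemma crdn_eq {γ : Fin n → ℝ} (h : γ ∈ Pos R) (i : Fin n) :
    (crdn R hn γ i : ℝ) = crd R hn γ i := by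
  obtain ⟨-, c, hc⟩ := mem_Pos.mp h
  have h1 := crd_rep R hn hc i
  simp only [crdn]
  rw [h1, Nat.floor_natCast]

lemma Pos_rep {γ : Fin n → ℝ} (h : γ ∈ Pos R) :
    γ = ∑ i, (crdn R hn γ i : ℝ) • R.sroot i := by
  conv_lhs => rw [crd_sum R hn γ]
  exact Finset.sum_congr rfl fun i _ => by rw [crdn_eq hn h]

omit hn in
lemma zero_not_mem_Δ : (0 : Fin n → ℝ) ∉ R.Δ := fun h => R.nonzero 0 h rfl

lemma not_pos_and_neg {γ : Fin n → ℝ} (h : γ ∈ Pos R) (h' : -γ ∈ Pos R) : False := by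
  have h1 : ∀ i, (0:ℝ) ≤ crd R hn γ i := fun i => by
    rw [← crdn_eq hn h i]; positivity
  have h2 : ∀ i, crd R hn γ i ≤ 0 := fun i => by
    have := crdn_eq hn h' i
    rw [crd_neg] at this
    nlinarith [Nat.cast_nonneg (α := ℝ) (crdn R hn (-γ) i)]
  have : γ = 0 := by
    rw [crd_sum R hn γ]
    refine Finset.sum_eq_zero fun i _ => ?_
    have : crd R hn γ i = 0 := le_antisymm (h2 i) (h1 i)
    rw [this, zero_smul]
  exact R.nonzero γ (Pos_subset h) this

omit hn in
lemma mem_Pos_or_neg {γ : Fin n → ℝ} (h : γ ∈ R.Δ) : γ ∈ Pos R ∨ -γ ∈ Pos R := by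
  rcases R.base γ h with ⟨c, hc⟩ | ⟨c, hc⟩
  · left; exact mem_Pos.mpr ⟨h, c, hc⟩
  · right
    refine mem_Pos.mpr ⟨neg_mem h, c, ?_⟩
    rw [hc]; simp

omit hn in
lemma sroot_mem_Pos (i : Fin n) : R.sroot i ∈ Pos R := by
  refine mem_Pos.mpr ⟨R.sroot_mem i, fun j => if i = j then 1 else 0, ?_⟩
  simp [ite_smul]

lemma crdn_sroot (j i : Fin n) : crdn R hn (R.sroot j) i = if j = i then 1 else 0 := by
  have := crdn_eq (R := R) hn (sroot_mem_Pos j) i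
  rw [crd_sroot] at this
  split at this <;> split <;> simp_all <;> exact_mod_cast this

lemma neg_sroot_not_Pos (i : Fin n) : -R.sroot i ∉ Pos R := fun h =>
  not_pos_and_neg hn (sroot_mem_Pos i) h

/-- `Q`-relative doubling: a negation-closed subset of `Δ` has twice as many
elements as its positive part. -/
lemma card_neg_closed {Q : Finset (Fin n → ℝ)} (hQ : Q ⊆ R.Δ)
    (hneg : ∀ γ ∈ Q, -γ ∈ Q) : Q.card = 2 * (Q ∩ Pos R).card := by
  classical
  have himage : Q = (Q ∩ Pos R) ∪ (Q ∩ Pos R).image (fun γ => -γ) := by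
    ext γ
    constructor
    · intro hγ
      rcases mem_Pos_or_neg (hQ hγ) with h | h
      · exact Finset.mem_union_left _ (Finset.mem_inter.mpr ⟨hγ, h⟩)
      · refine Finset.mem_union_right _ (Finset.mem_image.mpr ⟨-γ, ?_, by simp⟩)
        exact Finset.mem_inter.mpr ⟨hneg γ hγ, h⟩
    · intro hγ
      rcases Finset.mem_union.mp hγ with h | h
      · exact (Finset.mem_inter.mp h).1
      · obtain ⟨δ, hδ, hδγ⟩ := Finset.mem_image.mp h
        rw [← hδγ]
        exact hneg δ (Finset.mem_inter.mp hδ).1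
  have hdisj : Disjoint (Q ∩ Pos R) ((Q ∩ Pos R).image (fun γ => -γ)) := by
    rw [Finset.disjoint_left]
    intro γ h1 h2
    obtain ⟨δ, hδ, hδγ⟩ := Finset.mem_image.mp h2
    have hγP : γ ∈ Pos R := (Finset.mem_inter.mp h1).2
    have hδP : δ ∈ Pos R := (Finset.mem_inter.mp hδ).2
    rw [← hδγ] at hγP
    exact not_pos_and_neg hn hδP hγP
  conv_lhs => rw [himage]
  rw [Finset.card_union_of_disjoint hdisj,
    Finset.card_image_of_injective _ neg_injective]
  ring

lemma card_Δ_double : R.Δ.card = 2 * (Pos R).card := by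
  have := card_neg_closed hn (le_refl R.Δ) (fun γ h => neg_mem h)
  rwa [Finset.inter_eq_right.mpr (Pos_subset (R := R))] at this

lemma pos_add_sroot {γ : Fin n → ℝ} {i : Fin n} (hγ : γ ∈ Pos R)
    (h : γ + R.sroot i ∈ R.Δ) : γ + R.sroot i ∈ Pos R := by
  rcases mem_Pos_or_neg h with h' | h'
  · exact h'
  · exfalso
    have hc : crd R hn (-(γ + R.sroot i)) i = (crdn R hn (-(γ + R.sroot i)) i : ℝ) :=
      (crdn_eq hn h' i).symm
    rw [crd_neg, crd_add, crd_sroot] at hc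
    simp at hc
    have h1 : (0:ℝ) ≤ crd R hn γ i := by rw [← crdn_eq hn hγ i]; positivity
    nlinarith [Nat.cast_nonneg (α := ℝ) (crdn R hn (-(γ + R.sroot i)) i)]

lemma pos_sub_sroot {γ : Fin n → ℝ} {i : Fin n} (hγ : γ ∈ Pos R)
    (hne : γ ≠ R.sroot i) (h : γ - R.sroot i ∈ R.Δ) : γ - R.sroot i ∈ Pos R := by
  rcases mem_Pos_or_neg h with h' | h'
  · exact h'
  · exfalso
    -- crd γ j - δ_ij = -(crdn (-(γ - sroot i)) j)
    have hc : ∀ j, crd R hn γ j - (if i = j then 1 else 0) =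
        -(crdn R hn (-(γ - R.sroot i)) j : ℝ) := by
      intro j
      have := (crdn_eq hn h' j).symm
      rw [crd_neg, crd_sub, crd_sroot] at this
      linarith [this.symm]
    have hzero : ∀ j, j ≠ i → crdn R hn γ j = 0 := by
      intro j hj
      have := hc j
      rw [if_neg (fun hh => hj hh.symm)] at this
      have he := crdn_eq hn hγ j
      have : (crdn R hn γ j : ℝ) ≤ 0 := by
        rw [he]
        nlinarith [Nat.cast_nonneg (α := ℝ) (crdn R hn (-(γ - R.sroot i)) j)]
      exact_mod_cast le_antisymm (by exact_mod_cast this) (Nat.zero_le _)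
    have hrep := Pos_rep hn hγ
    have hγi : γ = (crdn R hn γ i : ℝ) • R.sroot i := by
      conv_lhs => rw [hrep]
      exact Finset.sum_eq_single i
        (fun j _ hj => by rw [hzero j hj]; simp)
        (fun hh => absurd (Finset.mem_univ i) hh)
    have hile : (crdn R hn γ i : ℝ) ≤ 1 := by
      have := hc i
      rw [if_pos rfl, ← crdn_eq hn hγ i] at this
      nlinarith [Nat.cast_nonneg (α := ℝ) (crdn R hn (-(γ - R.sroot i)) i)]
    have : crdn R hn γ i = 0 ∨ crdn R hn γ i = 1 := by
      have : crdn R hn γ i ≤ 1 := by exact_mod_cast hile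
      omega
    rcases this with h0 | h1
    · rw [h0] at hγi; simp at hγi
      exact R.nonzero γ (Pos_subset hγ) hγi
    · rw [h1] at hγi; simp at hγi
      exact hne hγi

end Pos

section Deg

variable (R) (hn : 0 < n)

lemma sum_dp {ι : Type*} (S : Finset ι) (f : ι → Fin n → ℝ) (y : Fin n → ℝ) :
    (∑ i ∈ S, f i) ⬝ᵥ y = ∑ i ∈ S, f i ⬝ᵥ y := by
  simp only [dotProduct, Finset.sum_apply, Finset.sum_mul]
  exact Finset.sum_comm

noncomputable def degn (s : Finset (Fin n)) (γ : Fin n → ℝ) : ℕ := ∑ i ∈ s, crdn R hn γ i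

noncomputable def htn (γ : Fin n → ℝ) : ℕ := ∑ i, crdn R hn γ i

variable {R}

lemma graded_eq (s : Finset (Fin n)) (d : ℕ) :
    graded R s d = (Pos R).filter (fun γ => degn R hn s γ = d) := by
  ext γ
  simp only [graded, Finset.mem_filter, mem_Pos]
  constructor
  · rintro ⟨hΔ, c, hc, hsum⟩
    refine ⟨⟨hΔ, c, hc⟩, ?_⟩
    have hcc : ∀ i, crdn R hn γ i = c i := by
      intro i
      have h1 := crd_rep R hn hc i
      have h2 := crdn_eq hn (mem_Pos.mpr ⟨hΔ, c, hc⟩) i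
      rw [h1] at h2; exact_mod_cast h2
    simp only [degn, hcc]
    exact hsum
  · rintro ⟨⟨hΔ, c, hc⟩, hd⟩
    exact ⟨hΔ, crdn R hn γ, Pos_rep hn (mem_Pos.mpr ⟨hΔ, c, hc⟩), hd⟩

lemma crdn_sub_sroot {γ : Fin n → ℝ} {i : Fin n} (hγ : γ ∈ Pos R)
    (h : γ - R.sroot i ∈ Pos R) (j : Fin n) :
    crdn R hn (γ - R.sroot i) j + (if i = j then 1 else 0) = crdn R hn γ j := by
  have h1 := crdn_eq hn h j
  rw [crd_sub, crd_sroot] at h1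
  have h2 := crdn_eq hn hγ j
  have key : ((crdn R hn (γ - R.sroot i) j + (if i = j then 1 else 0) : ℕ) : ℝ)
      = ((crdn R hn γ j : ℕ) : ℝ) := by
    push_cast
    rw [h1, h2]
    split <;> ring
  exact_mod_cast key

lemma degn_sub_sroot {s : Finset (Fin n)} {γ : Fin n → ℝ} {i : Fin n} (hγ : γ ∈ Pos R)
    (h : γ - R.sroot i ∈ Pos R) (his : i ∉ s) :
    degn R hn s (γ - R.sroot i) = degn R hn s γ := by
  simp only [degn]
  refine Finset.sum_congr rfl fun j hj => ?_
  have hc := crdn_sub_sroot hn hγ h j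
  rw [if_neg (fun he => his (by rw [he]; exact hj))] at hc
  omega

lemma htn_sub_sroot {γ : Fin n → ℝ} {i : Fin n} (hγ : γ ∈ Pos R)
    (h : γ - R.sroot i ∈ Pos R) :
    htn R hn (γ - R.sroot i) + 1 = htn R hn γ := by
  have h1 : ∑ j, (crdn R hn (γ - R.sroot i) j + (if i = j then 1 else 0))
      = ∑ j, crdn R hn γ j :=
    Finset.sum_congr rfl fun j _ => crdn_sub_sroot hn hγ h j
  rw [Finset.sum_add_distrib] at h1
  simp only [htn]
  simpa using h1

lemma htn_pos {γ : Fin n → ℝ} (hγ : γ ∈ Pos R) : 1 ≤ htn R hn γ := by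
  by_contra hc
  push_neg at hc
  have hz : ∑ i, crdn R hn γ i = 0 := Nat.lt_one_iff.mp hc
  have h0 : ∀ i ∈ Finset.univ, crdn R hn γ i = 0 := fun i hi =>
    Finset.sum_eq_zero_iff.mp hz i hi
  have : γ = 0 := by
    rw [Pos_rep hn hγ]
    refine Finset.sum_eq_zero fun i _ => ?_
    rw [h0 i (Finset.mem_univ i)]; simp
  exact R.nonzero γ (Pos_subset hγ) this

lemma htn_sroot (i : Fin n) : htn R hn (R.sroot i) = 1 := by
  simp only [htn, crdn_sroot hn]
  simp

lemma degn_le_htn (s : Finset (Fin n)) (γ : Fin n → ℝ) :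
    degn R hn s γ ≤ htn R hn γ :=
  Finset.sum_le_sum_of_subset (Finset.subset_univ s)

section NormDeg

variable {ℓ : ℝ} (hℓ : 0 < ℓ) (hnorm : ∀ γ ∈ R.Δ, γ ⬝ᵥ γ = ℓ)
include hℓ hnorm

lemma exists_descent {γ : Fin n → ℝ} (hγ : γ ∈ Pos R) (hht : 2 ≤ htn R hn γ) :
    ∃ i, γ - R.sroot i ∈ Pos R := by
  have hγΔ : γ ∈ R.Δ := Pos_subset hγ
  have hexp : ℓ = ∑ i, crd R hn γ i * (R.sroot i ⬝ᵥ γ) := by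
    calc ℓ = γ ⬝ᵥ γ := (hnorm γ hγΔ).symm
      _ = (∑ i, crd R hn γ i • R.sroot i) ⬝ᵥ γ :=
          congrArg (fun x => x ⬝ᵥ γ) (crd_sum R hn γ)
      _ = ∑ i, (crd R hn γ i • R.sroot i) ⬝ᵥ γ := sum_dp _ _ _
      _ = ∑ i, crd R hn γ i * (R.sroot i ⬝ᵥ γ) :=
          Finset.sum_congr rfl fun i _ => by rw [smul_dotProduct]; rfl
  have hex : ∃ i, 0 < crd R hn γ i * (R.sroot i ⬝ᵥ γ) := by
    by_contra hc
    push_neg at hc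
    have : ℓ ≤ 0 := hexp ▸ Finset.sum_nonpos (fun i _ => hc i)
    linarith
  obtain ⟨i, hi⟩ := hex
  have hcrd_nonneg : (0:ℝ) ≤ crd R hn γ i := by
    rw [← crdn_eq hn hγ i]; positivity
  have hdp_pos : 0 < R.sroot i ⬝ᵥ γ := by
    rcases le_or_gt (R.sroot i ⬝ᵥ γ) 0 with h | h
    · nlinarith
    · exact h
  have hne1 : γ ≠ R.sroot i := fun he => by
    rw [he, htn_sroot hn] at hht; omega
  have hne2 : γ ≠ -R.sroot i := fun he =>
    neg_sroot_not_Pos hn i (he ▸ hγ)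
  have hpc := pair_cases hℓ hnorm hγΔ (R.sroot_mem i) hne1 hne2
  have hcomm : γ ⬝ᵥ R.sroot i = R.sroot i ⬝ᵥ γ := dotProduct_comm _ _
  have hval : 2 * (R.sroot i ⬝ᵥ γ) = ℓ := by
    rcases hpc with h | h | h
    · rw [hcomm] at h; exact h
    · exfalso; rw [hcomm] at h; linarith
    · exfalso; rw [hcomm] at h; linarith
  have hsub : γ - R.sroot i ∈ R.Δ := sub_mem' hℓ hnorm hγΔ (R.sroot_mem i) hval
  exact ⟨i, pos_sub_sroot hn hγ hne1 hsub⟩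

lemma htn_le_card {γ : Fin n → ℝ} (hγ : γ ∈ Pos R) : htn R hn γ ≤ (Pos R).card := by
  classical
  set H := (Pos R).image (htn R hn) with hH
  have key : ∀ h, h ∈ H → ∀ j, 1 ≤ j → j ≤ h → j ∈ H := by
    intro h
    induction h using Nat.strong_induction_on with
    | _ h ih =>
      intro hhH j hj1 hjh
      rcases eq_or_lt_of_le hjh with rfl | hlt
      · exact hhH
      · obtain ⟨γ', hγ', hht⟩ := Finset.mem_image.mp hhH
        have h2 : 2 ≤ htn R hn γ' := by omega
        obtain ⟨i, hi⟩ := exists_descent hn hℓ hnorm hγ' h2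
        have hh1 : htn R hn (γ' - R.sroot i) + 1 = h := by
          rw [htn_sub_sroot hn hγ' hi]; exact hht
        have hmem : (h - 1) ∈ H :=
          Finset.mem_image.mpr ⟨γ' - R.sroot i, hi, by omega⟩
        exact ih (h - 1) (by omega) hmem j hj1 (by omega)
  have hγH : htn R hn γ ∈ H := Finset.mem_image.mpr ⟨γ, hγ, rfl⟩
  have hsub : Finset.Icc 1 (htn R hn γ) ⊆ H := fun j hj => by
    rw [Finset.mem_Icc] at hj
    exact key _ hγH j hj.1 hj.2
  calc htn R hn γ = (Finset.Icc 1 (htn R hn γ)).card := by rw [Nat.card_Icc]; omega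
    _ ≤ H.card := Finset.card_le_card hsub
    _ ≤ (Pos R).card := Finset.card_image_le

end NormDeg

end Deg

section BForm

/-- reflection in a root -/
noncomputable def rf (ℓ : ℝ) (β x : Fin n → ℝ) : Fin n → ℝ :=
  x - ((2 * (β ⬝ᵥ x) / ℓ) • β)

/-- the invariant bilinear form attached to a reflection-closed set of roots -/
noncomputable def Bf (Q : Finset (Fin n → ℝ)) (x y : Fin n → ℝ) : ℝ :=
  ∑ γ ∈ Q, (γ ⬝ᵥ x) * (γ ⬝ᵥ y)

lemma Bf_comm (Q : Finset (Fin n → ℝ)) (x y : Fin n → ℝ) : Bf Q x y = Bf Q y x :=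
  Finset.sum_congr rfl fun γ _ => mul_comm _ _

lemma dp_rf (ℓ : ℝ) (β x y : Fin n → ℝ) :
    y ⬝ᵥ rf ℓ β x = y ⬝ᵥ x - (2 * (β ⬝ᵥ x) / ℓ) * (y ⬝ᵥ β) := by
  simp [rf, dotProduct_sub, dotProduct_smul, smul_eq_mul]

lemma rf_selfadj (ℓ : ℝ) (β x y : Fin n → ℝ) :
    y ⬝ᵥ rf ℓ β x = (rf ℓ β y) ⬝ᵥ x := by
  rw [dp_rf]
  simp only [rf, sub_dotProduct, smul_dotProduct, smul_eq_mul]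
  rw [dotProduct_comm β x, dotProduct_comm β y]
  ring

lemma rf_invol {ℓ : ℝ} {β : Fin n → ℝ} (hβ : β ⬝ᵥ β = ℓ) (hℓ0 : ℓ ≠ 0)
    (x : Fin n → ℝ) : rf ℓ β (rf ℓ β x) = x := by
  have hdp : β ⬝ᵥ rf ℓ β x = -(β ⬝ᵥ x) := by
    rw [dp_rf, hβ]
    field_simp
    ring
  rw [rf, hdp]
  have hc : 2 * -(β ⬝ᵥ x) / ℓ = -(2 * (β ⬝ᵥ x) / ℓ) := by ring
  rw [hc, neg_smul, sub_neg_eq_add, rf]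
  abel

variable {ℓ : ℝ} (hℓ : 0 < ℓ) (hnorm : ∀ γ ∈ R.Δ, γ ⬝ᵥ γ = ℓ)
variable {Q : Finset (Fin n → ℝ)} (hQΔ : Q ⊆ R.Δ) (hQneg : ∀ γ ∈ Q, -γ ∈ Q)
  (hQrefl : ∀ β ∈ Q, ∀ γ ∈ Q, γ - ((2 * (β ⬝ᵥ γ) / ℓ) • β) ∈ Q)

include hℓ hnorm hQΔ hQrefl in
lemma Bf_rf {β : Fin n → ℝ} (hβQ : β ∈ Q) (x y : Fin n → ℝ) :
    Bf Q (rf ℓ β x) (rf ℓ β y) = Bf Q x y := by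
  have hβn : β ⬝ᵥ β = ℓ := hnorm β (hQΔ hβQ)
  have hℓ0 : ℓ ≠ 0 := ne_of_gt hℓ
  have hmem : ∀ γ ∈ Q, rf ℓ β γ ∈ Q := fun γ hγ => hQrefl β hβQ γ hγ
  refine Finset.sum_nbij' (fun γ => rf ℓ β γ) (fun γ => rf ℓ β γ) hmem hmem
    (fun γ _ => rf_invol hβn hℓ0 γ) (fun γ _ => rf_invol hβn hℓ0 γ) ?_
  intro γ _
  rw [rf_selfadj ℓ β x γ, rf_selfadj ℓ β y γ]

include hℓ hnorm hQΔ hQrefl in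
lemma Bf_ortho {β x : Fin n → ℝ} (hβQ : β ∈ Q) (hx : β ⬝ᵥ x = 0) :
    Bf Q β x = 0 := by
  have hβn : β ⬝ᵥ β = ℓ := hnorm β (hQΔ hβQ)
  have hℓ0 : ℓ ≠ 0 := ne_of_gt hℓ
  have h1 : rf ℓ β β = -β := by
    rw [rf, hβn]
    have : 2 * ℓ / ℓ = 2 := by field_simp
    rw [this]
    funext t; simp; ring
  have h2 : rf ℓ β x = x := by
    rw [rf, dotProduct_comm β x] at *
    rw [hx]
    simp
  have h3 := Bf_rf hℓ hnorm hQΔ hQrefl hβQ β x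
  rw [h1, h2] at h3
  have h4 : Bf Q (-β) x = -Bf Q β x := by
    unfold Bf
    rw [← Finset.sum_neg_distrib]
    exact Finset.sum_congr rfl fun γ _ => by rw [dotProduct_neg]; ring
  rw [h4] at h3
  linarith

include hℓ hnorm hQΔ hQrefl in
lemma Bf_eigen {β : Fin n → ℝ} (hβQ : β ∈ Q) (x : Fin n → ℝ) :
    ℓ * Bf Q β x = Bf Q β β * (β ⬝ᵥ x) := by
  have hβn : β ⬝ᵥ β = ℓ := hnorm β (hQΔ hβQ)
  have hℓ0 : ℓ ≠ 0 := ne_of_gt hℓ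
  have hx' : β ⬝ᵥ (x - ((β ⬝ᵥ x)/ℓ) • β) = 0 := by
    rw [dotProduct_sub, dotProduct_smul, hβn, smul_eq_mul]
    field_simp
    ring
  have h0 : Bf Q β (x - ((β ⬝ᵥ x)/ℓ) • β) = 0 :=
    Bf_ortho hℓ hnorm hQΔ hQrefl hβQ hx'
  have hlin : Bf Q β (x - ((β ⬝ᵥ x)/ℓ) • β)
      = Bf Q β x - ((β ⬝ᵥ x)/ℓ) * Bf Q β β := by
    unfold Bf
    rw [Finset.mul_sum, ← Finset.sum_sub_distrib]
    refine Finset.sum_congr rfl fun γ _ => ?_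
    rw [dotProduct_sub, dotProduct_smul, smul_eq_mul]
    ring
  rw [hlin] at h0
  have h0' : Bf Q β x = ((β ⬝ᵥ x)/ℓ) * Bf Q β β := by linarith
  rw [h0']
  field_simp

variable (hn : 0 < n)

include hℓ hnorm hQΔ hQrefl hn in
lemma Bf_trace {s : Finset (Fin n)} (hQsupp : ∀ γ ∈ Q, ∀ i ∈ s, crd R hn γ i = 0)
    (hQsr : ∀ i ∈ sᶜ, R.sroot i ∈ Q) :
    ∑ i ∈ sᶜ, Bf Q (R.sroot i) (R.sroot i) = Q.card * ℓ^2 := by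
  have hℓ0 : ℓ ≠ 0 := ne_of_gt hℓ
  have step1 : ∀ γ ∈ Q, γ ⬝ᵥ γ = ∑ i ∈ sᶜ, crd R hn γ i * (R.sroot i ⬝ᵥ γ) := by
    intro γ hγ
    have hfull : γ ⬝ᵥ γ = ∑ i, crd R hn γ i * (R.sroot i ⬝ᵥ γ) := by
      calc γ ⬝ᵥ γ = (∑ i, crd R hn γ i • R.sroot i) ⬝ᵥ γ :=
            congrArg (fun x => x ⬝ᵥ γ) (crd_sum R hn γ)
        _ = ∑ i, (crd R hn γ i • R.sroot i) ⬝ᵥ γ := sum_dp _ _ _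
        _ = ∑ i, crd R hn γ i * (R.sroot i ⬝ᵥ γ) :=
            Finset.sum_congr rfl fun i _ => by rw [smul_dotProduct]; rfl
    rw [hfull, ← Finset.sum_add_sum_compl s]
    rw [Finset.sum_eq_zero (fun i hi => by rw [hQsupp γ hγ i hi, zero_mul]), zero_add]
  calc ∑ i ∈ sᶜ, Bf Q (R.sroot i) (R.sroot i)
      = ∑ i ∈ sᶜ, Bf Q (R.sroot i) (R.sroot i) * (R.sroot i ⬝ᵥ du R hn i) := by
        refine Finset.sum_congr rfl fun i _ => ?_
        rw [dp_du, crd_sroot, if_pos rfl, mul_one]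
    _ = ∑ i ∈ sᶜ, ℓ * Bf Q (R.sroot i) (du R hn i) := by
        refine Finset.sum_congr rfl fun i hi => ?_
        rw [Bf_eigen hℓ hnorm hQΔ hQrefl (hQsr i hi)]
    _ = ∑ i ∈ sᶜ, ℓ * ∑ γ ∈ Q, (γ ⬝ᵥ du R hn i) * (γ ⬝ᵥ R.sroot i) := by
        refine Finset.sum_congr rfl fun i hi => ?_
        rw [Bf_comm]; rfl
    _ = ℓ * ∑ γ ∈ Q, ∑ i ∈ sᶜ, crd R hn γ i * (γ ⬝ᵥ R.sroot i) := by
        rw [← Finset.mul_sum]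
        rw [Finset.sum_comm]
        congr 1
        refine Finset.sum_congr rfl fun γ _ => Finset.sum_congr rfl fun i _ => ?_
        rw [dp_du]
    _ = ℓ * ∑ γ ∈ Q, γ ⬝ᵥ γ := by
        congr 1
        refine Finset.sum_congr rfl fun γ hγ => ?_
        rw [step1 γ hγ]
        exact Finset.sum_congr rfl fun i _ => by rw [dotProduct_comm]
    _ = ℓ * ∑ γ ∈ Q, ℓ := by
        congr 1
        exact Finset.sum_congr rfl fun γ hγ => hnorm γ (hQΔ (by exact hγ))
    _ = Q.card * ℓ^2 := by
        rw [Finset.sum_const, nsmul_eq_mul]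
        ring

variable (R) in
/-- the set of roots `γ` in the positive part of `Q` with `⟨γ, αᵢ∨⟩ = -1`;
these are in bijection with Hasse edges of type `i`. -/
noncomputable def Mset (ℓ : ℝ) (Q : Finset (Fin n → ℝ)) (i : Fin n) :
    Finset (Fin n → ℝ) :=
  (Q ∩ Pos R).filter (fun γ => 2 * (γ ⬝ᵥ R.sroot i) = -ℓ)

include hℓ hnorm hQΔ hQrefl hn in
lemma Pset_card_eq {i : Fin n} (hαQ : R.sroot i ∈ Q) :
    ((Q ∩ Pos R).filter (fun γ => 2 * (γ ⬝ᵥ R.sroot i) = ℓ)).card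
      = (Mset R ℓ Q i).card := by
  classical
  have hαΔ := R.sroot_mem i
  have hαn := hnorm _ hαΔ
  have hℓ0 : ℓ ≠ 0 := ne_of_gt hℓ
  apply Finset.card_nbij (fun γ => γ - R.sroot i)
  · intro γ hγ
    rw [Finset.mem_coe, Finset.mem_filter] at hγ
    obtain ⟨hγQP, hval⟩ := hγ
    have hγQ : γ ∈ Q := (Finset.mem_inter.mp hγQP).1
    have hγP : γ ∈ Pos R := (Finset.mem_inter.mp hγQP).2
    have hγΔ : γ ∈ R.Δ := hQΔ hγQ
    have hne1 : γ ≠ R.sroot i := fun he => by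
      rw [he] at hval; rw [hαn] at hval; linarith
    have hsub : γ - R.sroot i ∈ R.Δ :=
      sub_mem' hℓ hnorm hγΔ hαΔ (by rw [dotProduct_comm]; exact hval)
    have hQ' : γ - R.sroot i ∈ Q := by
      have h := hQrefl (R.sroot i) hαQ γ hγQ
      have hc : 2 * (R.sroot i ⬝ᵥ γ) / ℓ = 1 := by
        rw [dotProduct_comm, hval]
        field_simp
      rw [hc, one_smul] at h
      exact h
    have hP' : γ - R.sroot i ∈ Pos R := pos_sub_sroot hn hγP hne1 hsub
    have hval' : 2 * ((γ - R.sroot i) ⬝ᵥ R.sroot i) = -ℓ := by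
      rw [sub_dotProduct, hαn]; linarith
    simp only [Finset.mem_coe, Mset, Finset.mem_filter]
    exact ⟨Finset.mem_inter.mpr ⟨hQ', hP'⟩, hval'⟩
  · intro γ₁ _ γ₂ _ he
    have := congrArg (fun x => x + R.sroot i) he
    simpa using this
  · intro γ hγ
    simp only [Mset, Finset.coe_filter, Set.mem_setOf_eq] at hγ
    obtain ⟨hγQP, hval⟩ := hγ
    have hγQ : γ ∈ Q := (Finset.mem_inter.mp hγQP).1
    have hγP : γ ∈ Pos R := (Finset.mem_inter.mp hγQP).2
    have hγΔ : γ ∈ R.Δ := hQΔ hγQ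
    have hadd : γ + R.sroot i ∈ R.Δ :=
      add_mem' hℓ hnorm hγΔ hαΔ (by rw [dotProduct_comm]; exact hval)
    have hQ' : γ + R.sroot i ∈ Q := by
      have h := hQrefl (R.sroot i) hαQ γ hγQ
      have hc : 2 * (R.sroot i ⬝ᵥ γ) / ℓ = -1 := by
        rw [dotProduct_comm, hval]
        field_simp
      rw [hc, neg_one_smul, sub_neg_eq_add] at h
      exact h
    have hP' : γ + R.sroot i ∈ Pos R := pos_add_sroot hn hγP hadd
    have hval' : 2 * ((γ + R.sroot i) ⬝ᵥ R.sroot i) = ℓ := by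
      rw [add_dotProduct, hαn]; linarith
    refine ⟨γ + R.sroot i, ?_, by simp⟩
    rw [Finset.mem_coe, Finset.mem_filter]
    exact ⟨Finset.mem_inter.mpr ⟨hQ', hP'⟩, hval'⟩

include hQΔ hQneg hn in
lemma Qfilter_split (v : Fin n → ℝ) (c : ℝ) :
    (Q.filter (fun γ => 2 * (γ ⬝ᵥ v) = c)).card
      = ((Q ∩ Pos R).filter (fun γ => 2 * (γ ⬝ᵥ v) = c)).card
        + ((Q ∩ Pos R).filter (fun γ => 2 * (γ ⬝ᵥ v) = -c)).card := by
  classical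
  rw [← Finset.card_filter_add_card_filter_not
    (s := Q.filter (fun γ => 2 * (γ ⬝ᵥ v) = c)) (fun γ => γ ∈ Pos R)]
  congr 1
  · -- positive part
    congr 1
    ext γ
    simp only [Finset.mem_filter, Finset.mem_inter]
    tauto
  · -- negative part: bijection by negation
    apply Finset.card_nbij (fun γ => -γ)
    · intro γ hγ
      simp only [Finset.coe_filter, Set.mem_setOf_eq, Finset.mem_filter] at hγ ⊢
      obtain ⟨⟨hγQ, hval⟩, hγnP⟩ := hγ
      refine ⟨Finset.mem_inter.mpr ⟨hQneg γ hγQ, ?_⟩, ?_⟩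
      · rcases mem_Pos_or_neg (hQΔ hγQ) with h | h
        · exact absurd h hγnP
        · exact h
      · rw [neg_dotProduct]; linarith
    · intro γ₁ _ γ₂ _ he
      simpa using congrArg (fun x => -x) he
    · intro γ hγ
      simp only [Finset.coe_filter, Set.mem_setOf_eq, Finset.mem_filter] at hγ
      obtain ⟨hγQP, hval⟩ := hγ
      have hγQ : γ ∈ Q := (Finset.mem_inter.mp hγQP).1
      have hγP : γ ∈ Pos R := (Finset.mem_inter.mp hγQP).2
      refine ⟨-γ, ?_, by simp⟩
      simp only [Finset.coe_filter, Set.mem_setOf_eq, Finset.mem_filter]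
      refine ⟨⟨hQneg γ hγQ, by rw [neg_dotProduct]; linarith⟩, ?_⟩
      intro hc
      exact not_pos_and_neg hn hγP hc

include hℓ hnorm hQΔ hQneg hQrefl hn in
lemma Bf_diag {i : Fin n} (hαQ : R.sroot i ∈ Q) :
    Bf Q (R.sroot i) (R.sroot i) = 2 * ℓ^2 + (Mset R ℓ Q i).card * ℓ^2 := by
  classical
  have hαΔ := R.sroot_mem i
  have hαn := hnorm _ hαΔ
  have hℓ0 : ℓ ≠ 0 := ne_of_gt hℓ
  have hnegαQ : -R.sroot i ∈ Q := hQneg _ hαQ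
  have hαne : R.sroot i ≠ -R.sroot i := by
    intro he
    have : R.sroot i = 0 := by
      funext t; have := congrFun he t; simp at this ⊢; linarith
    exact R.nonzero _ hαΔ this
  have key : ∀ γ ∈ Q, (γ ⬝ᵥ R.sroot i) * (γ ⬝ᵥ R.sroot i)
      = if γ = R.sroot i ∨ γ = -R.sroot i then ℓ^2
        else if 2 * (γ ⬝ᵥ R.sroot i) = ℓ ∨ 2 * (γ ⬝ᵥ R.sroot i) = -ℓ then ℓ^2/4 else 0 := by
    intro γ hγ
    by_cases h1 : γ = R.sroot i ∨ γ = -R.sroot i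
    · rw [if_pos h1]
      rcases h1 with he | he
      · rw [he, hαn]; ring
      · rw [he, neg_dotProduct, hαn]; ring
    · rw [if_neg h1]
      push_neg at h1
      rcases pair_cases hℓ hnorm (hQΔ hγ) hαΔ h1.1 h1.2 with h | h | h
      · rw [if_pos (Or.inl h)]; nlinarith
      · rw [if_neg (by push_neg; constructor <;> intro hc <;> nlinarith)]
        nlinarith
      · rw [if_pos (Or.inr h)]; nlinarith
  have hBf : Bf Q (R.sroot i) (R.sroot i)
      = ∑ γ ∈ Q, (if γ = R.sroot i ∨ γ = -R.sroot i then ℓ^2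
        else if 2 * (γ ⬝ᵥ R.sroot i) = ℓ ∨ 2 * (γ ⬝ᵥ R.sroot i) = -ℓ then ℓ^2/4 else 0) :=
    Finset.sum_congr rfl key
  rw [hBf, Finset.sum_ite]
  have hc1 : (Q.filter (fun γ => γ = R.sroot i ∨ γ = -R.sroot i))
      = {R.sroot i, -R.sroot i} := by
    ext γ
    simp only [Finset.mem_filter, Finset.mem_insert, Finset.mem_singleton]
    constructor
    · exact fun h => h.2
    · rintro (rfl | rfl)
      · exact ⟨hαQ, Or.inl rfl⟩
      · exact ⟨hnegαQ, Or.inr rfl⟩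
  have hcard1 : (Q.filter (fun γ => γ = R.sroot i ∨ γ = -R.sroot i)).card = 2 := by
    rw [hc1]
    rw [Finset.card_insert_of_notMem (by simpa using hαne), Finset.card_singleton]
  rw [Finset.sum_const, hcard1, Finset.sum_ite, Finset.sum_const, Finset.sum_const_zero]
  -- now the middle count
  have hmid : ((Q.filter (fun γ => ¬(γ = R.sroot i ∨ γ = -R.sroot i))).filter
      (fun γ => 2 * (γ ⬝ᵥ R.sroot i) = ℓ ∨ 2 * (γ ⬝ᵥ R.sroot i) = -ℓ)).card
      = (Q.filter (fun γ => 2 * (γ ⬝ᵥ R.sroot i) = ℓ)).card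
        + (Q.filter (fun γ => 2 * (γ ⬝ᵥ R.sroot i) = -ℓ)).card := by
    have hset : (Q.filter (fun γ => ¬(γ = R.sroot i ∨ γ = -R.sroot i))).filter
        (fun γ => 2 * (γ ⬝ᵥ R.sroot i) = ℓ ∨ 2 * (γ ⬝ᵥ R.sroot i) = -ℓ)
        = (Q.filter (fun γ => 2 * (γ ⬝ᵥ R.sroot i) = ℓ))
          ∪ (Q.filter (fun γ => 2 * (γ ⬝ᵥ R.sroot i) = -ℓ)) := by
      ext γ
      simp only [Finset.mem_filter, Finset.mem_union]
      constructor
      · rintro ⟨⟨hγQ, -⟩, hv⟩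
        rcases hv with h | h
        · exact Or.inl ⟨hγQ, h⟩
        · exact Or.inr ⟨hγQ, h⟩
      · intro h
        have hγQ : γ ∈ Q := by rcases h with ⟨h, -⟩ | ⟨h, -⟩ <;> exact h
        have hγv : 2 * (γ ⬝ᵥ R.sroot i) = ℓ ∨ 2 * (γ ⬝ᵥ R.sroot i) = -ℓ := by
          rcases h with ⟨-, h⟩ | ⟨-, h⟩
          · exact Or.inl h
          · exact Or.inr h
        refine ⟨⟨hγQ, ?_⟩, hγv⟩
        rintro (rfl | rfl)
        · rcases hγv with h | h <;> rw [hαn] at h <;> linarith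
        · rcases hγv with h | h <;> rw [neg_dotProduct, hαn] at h <;> linarith
    rw [hset]
    apply Finset.card_union_of_disjoint
    rw [Finset.disjoint_left]
    rintro γ h1 h2
    rw [Finset.mem_filter] at h1 h2
    have := h1.2; have := h2.2
    linarith
  rw [hmid]
  have hM := Qfilter_split hQΔ hQneg hn (R.sroot i) (-ℓ)
  rw [neg_neg] at hM
  have hP := Qfilter_split hQΔ hQneg hn (R.sroot i) ℓ
  have hPM := Pset_card_eq hℓ hnorm hQΔ hQrefl hn hαQ
  rw [hM, hP, hPM]
  simp only [Mset]
  push_cast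
  ring

include hℓ hnorm hQΔ hQneg hQrefl hn in
/-- The master counting identity for a reflection-closed subsystem. -/
lemma Mset_total {s : Finset (Fin n)} (hQsupp : ∀ γ ∈ Q, ∀ i ∈ s, crd R hn γ i = 0)
    (hQsr : ∀ i ∈ sᶜ, R.sroot i ∈ Q) :
    ∑ i ∈ sᶜ, (Mset R ℓ Q i).card + 2 * sᶜ.card = 2 * (Q ∩ Pos R).card := by
  have htr := Bf_trace hℓ hnorm hQΔ hQrefl hn hQsupp hQsr
  have hdiag : ∀ i ∈ sᶜ, Bf Q (R.sroot i) (R.sroot i)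
      = 2 * ℓ^2 + (Mset R ℓ Q i).card * ℓ^2 := fun i hi =>
    Bf_diag hℓ hnorm hQΔ hQneg hQrefl hn (hQsr i hi)
  have hQcard : Q.card = 2 * (Q ∩ Pos R).card := card_neg_closed hn hQΔ hQneg
  have hℓ2 : ℓ^2 ≠ 0 := pow_ne_zero 2 (ne_of_gt hℓ)
  rw [Finset.sum_congr rfl hdiag, Finset.sum_add_distrib, Finset.sum_const, nsmul_eq_mul,
    ← Finset.sum_mul, hQcard] at htr
  have h3 : ((∑ i ∈ sᶜ, ((Mset R ℓ Q i).card : ℝ)) + 2 * (sᶜ.card : ℝ)) * ℓ^2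
      = (((2 * (Q ∩ Pos R).card : ℕ)) : ℝ) * ℓ^2 := by
    rw [← htr]; push_cast; ring
  have h4 := mul_right_cancel₀ hℓ2 h3
  exact_mod_cast h4

end BForm

section Bookkeeping

variable (hn : 0 < n) {ℓ : ℝ} (hℓ : 0 < ℓ) (hnorm : ∀ γ ∈ R.Δ, γ ⬝ᵥ γ = ℓ)
variable (s : Finset (Fin n))

include hn hℓ hnorm

lemma degn_bound {γ : Fin n → ℝ} (hγ : γ ∈ Pos R) :
    degn R hn s γ ≤ R.Δ.card :=
  le_trans (degn_le_htn hn s γ)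
    (le_trans (htn_le_card hn hℓ hnorm hγ) (Finset.card_le_card (Pos_subset (R := R))))

lemma sum_graded_cards :
    (∑ d ∈ Finset.Icc 1 R.Δ.card, (graded R s d).card) + (graded R s 0).card
      = (Pos R).card := by
  classical
  set T := (Pos R).filter (fun γ => ¬(degn R hn s γ = 0)) with hT
  have hfib : T.card = ∑ d ∈ Finset.Icc 1 R.Δ.card, (T.filter (fun γ => degn R hn s γ = d)).card := by
    apply Finset.card_eq_sum_card_fiberwise
    intro γ hγ
    rw [Finset.mem_coe, hT, Finset.mem_filter] at hγ
    rw [Finset.mem_coe, Finset.mem_Icc]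
    exact ⟨by omega, degn_bound hn hℓ hnorm s hγ.1⟩
  have heq : ∀ d ∈ Finset.Icc 1 R.Δ.card,
      T.filter (fun γ => degn R hn s γ = d) = graded R s d := by
    intro d hd
    rw [Finset.mem_Icc] at hd
    rw [graded_eq hn s d, hT]
    ext γ
    simp only [Finset.mem_filter]
    constructor
    · rintro ⟨⟨h1, -⟩, h3⟩; exact ⟨h1, h3⟩
    · rintro ⟨h1, h2⟩; exact ⟨⟨h1, by omega⟩, h2⟩
  have hsum : ∑ d ∈ Finset.Icc 1 R.Δ.card, (graded R s d).card = T.card := by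
    rw [hfib]
    exact Finset.sum_congr rfl fun d hd => by rw [heq d hd]
  rw [hsum, hT, graded_eq hn s 0]
  have := Finset.card_filter_add_card_filter_not
    (s := Pos R) (fun γ => degn R hn s γ = 0)
  omega

/-- the total (ungraded) edge set -/
noncomputable def Fedges (R : SimpleRootSystem n) (s : Finset (Fin n)) (hn : 0 < n) :
    Finset ((Fin n → ℝ) × Fin n) :=
  ((Pos R) ×ˢ sᶜ).filter (fun p => p.1 - R.sroot p.2 ∈ Pos R)

omit hℓ hnorm in
lemma gradedEdges_eq (d : ℕ) :
    gradedEdges R s d = (Fedges R s hn).filter (fun p => degn R hn s p.1 = d) := by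
  classical
  ext p
  simp only [gradedEdges, Fedges, Finset.mem_filter, Finset.mem_product,
    graded_eq hn s d]
  constructor
  · rintro ⟨⟨⟨hp1, hd1⟩, hp2⟩, ⟨hp3, -⟩⟩
    exact ⟨⟨⟨hp1, hp2⟩, hp3⟩, hd1⟩
  · rintro ⟨⟨⟨hp1, hp2⟩, hp3⟩, hd1⟩
    have his : p.2 ∉ s := Finset.mem_compl.mp hp2
    have hdeq : degn R hn s (p.1 - R.sroot p.2) = degn R hn s p.1 :=
      degn_sub_sroot hn hp1 hp3 his
    exact ⟨⟨⟨hp1, hd1⟩, hp2⟩, ⟨hp3, by rw [hdeq]; exact hd1⟩⟩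

lemma sum_gradedEdges_cards :
    (∑ d ∈ Finset.Icc 1 R.Δ.card, (gradedEdges R s d).card) + (gradedEdges R s 0).card
      = (Fedges R s hn).card := by
  classical
  set T := (Fedges R s hn).filter (fun p => ¬(degn R hn s p.1 = 0)) with hT
  have hfib : T.card
      = ∑ d ∈ Finset.Icc 1 R.Δ.card, (T.filter (fun p => degn R hn s p.1 = d)).card := by
    apply Finset.card_eq_sum_card_fiberwise
    intro p hp
    rw [Finset.mem_coe, hT, Finset.mem_filter] at hp
    have hp1 : p.1 ∈ Pos R := by
      have := hp.1
      rw [Fedges, Finset.mem_filter, Finset.mem_product] at this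
      exact this.1.1
    rw [Finset.mem_coe, Finset.mem_Icc]
    exact ⟨Nat.one_le_iff_ne_zero.mpr hp.2, degn_bound hn hℓ hnorm s hp1⟩
  have heq : ∀ d ∈ Finset.Icc 1 R.Δ.card,
      T.filter (fun p => degn R hn s p.1 = d)
        = (Fedges R s hn).filter (fun p => degn R hn s p.1 = d) := by
    intro d hd
    rw [Finset.mem_Icc] at hd
    rw [hT]
    ext p
    simp only [Finset.mem_filter]
    constructor
    · rintro ⟨⟨h1, -⟩, h3⟩; exact ⟨h1, h3⟩
    · rintro ⟨h1, h2⟩; exact ⟨⟨h1, by omega⟩, h2⟩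
  have hsum : ∑ d ∈ Finset.Icc 1 R.Δ.card, (gradedEdges R s d).card = T.card := by
    rw [hfib]
    refine Finset.sum_congr rfl fun d hd => ?_
    rw [heq d hd, ← gradedEdges_eq hn s d]
  rw [hsum, gradedEdges_eq hn s 0]
  have hunion : (Fedges R s hn).filter (fun p => degn R hn s p.1 = 0) ∪ T = Fedges R s hn := by
    rw [hT]; exact Finset.filter_union_filter_not_eq _ _
  have hdisj : Disjoint ((Fedges R s hn).filter (fun p => degn R hn s p.1 = 0)) T := by
    rw [hT]; exact Finset.disjoint_filter_filter_not _ _ _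
  have hcard : ((Fedges R s hn).filter (fun p => degn R hn s p.1 = 0)).card + T.card
      = (Fedges R s hn).card := by
    rw [← Finset.card_union_of_disjoint hdisj, hunion]
  omega

/-- per-type edge count, full system -/
lemma Fedges_fiber_card {i : Fin n} (hi : i ∈ sᶜ) :
    (((Fedges R s hn).filter (fun p => p.2 = i)).card) = (Mset R ℓ R.Δ i).card := by
  classical
  have hαΔ := R.sroot_mem i
  apply Finset.card_nbij (fun p => p.1 - R.sroot i)
  · intro p hp
    rw [Finset.mem_coe, Finset.mem_filter] at hp
    obtain ⟨hpF, hpi⟩ := hp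
    rw [Fedges, Finset.mem_filter, Finset.mem_product] at hpF
    obtain ⟨⟨hp1, -⟩, hp3⟩ := hpF
    rw [hpi] at hp3
    have hμΔ : p.1 ∈ R.Δ := Pos_subset hp1
    have hsubΔ : p.1 - R.sroot i ∈ R.Δ := Pos_subset hp3
    have hval := chain_pair hℓ hnorm hμΔ hαΔ hsubΔ
    simp only [Finset.mem_coe, Mset, Finset.mem_filter]
    exact ⟨Finset.mem_inter.mpr ⟨hsubΔ, hp3⟩, hval⟩
  · intro p₁ hp₁ p₂ hp₂ he
    simp only [Finset.mem_coe, Finset.mem_filter] at hp₁ hp₂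
    have h1 : p₁.1 = p₂.1 := by
      have := congrArg (fun x => x + R.sroot i) he
      simpa using this
    exact Prod.ext h1 (by rw [hp₁.2, hp₂.2])
  · intro γ hγ
    simp only [Finset.mem_coe, Mset, Finset.mem_filter] at hγ
    obtain ⟨hγQP, hval⟩ := hγ
    have hγΔ : γ ∈ R.Δ := (Finset.mem_inter.mp hγQP).1
    have hγP : γ ∈ Pos R := (Finset.mem_inter.mp hγQP).2
    have haddΔ : γ + R.sroot i ∈ R.Δ :=
      add_mem' hℓ hnorm hγΔ hαΔ (by rw [dotProduct_comm]; exact hval)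
    have haddP : γ + R.sroot i ∈ Pos R := pos_add_sroot hn hγP haddΔ
    refine ⟨(γ + R.sroot i, i), ?_, by simp⟩
    rw [Finset.mem_coe, Finset.mem_filter]
    refine ⟨?_, rfl⟩
    rw [Fedges, Finset.mem_filter, Finset.mem_product]
    exact ⟨⟨haddP, hi⟩, by simpa using hγP⟩

lemma Fedges_card :
    (Fedges R s hn).card = ∑ i ∈ sᶜ, (Mset R ℓ R.Δ i).card := by
  classical
  have hfib : (Fedges R s hn).card
      = ∑ i ∈ sᶜ, ((Fedges R s hn).filter (fun p => p.2 = i)).card := by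
    apply Finset.card_eq_sum_card_fiberwise
    intro p hp
    rw [Finset.mem_coe, Fedges, Finset.mem_filter, Finset.mem_product] at hp
    exact hp.1.2
  rw [hfib]
  exact Finset.sum_congr rfl fun i hi => Fedges_fiber_card hn hℓ hnorm s hi

omit hℓ hnorm in
lemma degn_zero_iff {γ : Fin n → ℝ} (hγ : γ ∈ Pos R) :
    degn R hn s γ = 0 ↔ ∀ j ∈ s, crd R hn γ j = 0 := by
  constructor
  · intro h j hj
    have : crdn R hn γ j = 0 := Finset.sum_eq_zero_iff.mp h j hj
    rw [← crdn_eq hn hγ j, this]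
    simp
  · intro h
    refine Finset.sum_eq_zero fun j hj => ?_
    have := crdn_eq hn hγ j
    rw [h j hj] at this
    exact_mod_cast this

/-- the degree-zero subsystem -/
noncomputable def Qzero (R : SimpleRootSystem n) (hn : 0 < n) (s : Finset (Fin n)) :
    Finset (Fin n → ℝ) :=
  R.Δ.filter (fun γ => ∀ j ∈ s, crd R hn γ j = 0)

omit hℓ hnorm in
lemma Qzero_inter_Pos : Qzero R hn s ∩ Pos R = graded R s 0 := by
  classical
  ext γ
  rw [graded_eq hn s 0, Finset.mem_inter, Qzero, Finset.mem_filter, Finset.mem_filter]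
  constructor
  · rintro ⟨⟨hΔ, hcrd⟩, hP⟩
    exact ⟨hP, (degn_zero_iff hn s hP).mpr hcrd⟩
  · rintro ⟨hP, hd⟩
    exact ⟨⟨Pos_subset hP, (degn_zero_iff hn s hP).mp hd⟩, hP⟩

lemma gradedEdges_zero_fiber {i : Fin n} (hi : i ∈ sᶜ) :
    ((gradedEdges R s 0).filter (fun p => p.2 = i)).card
      = (Mset R ℓ (Qzero R hn s) i).card := by
  classical
  have hαΔ := R.sroot_mem i
  have his : i ∉ s := Finset.mem_compl.mp hi
  apply Finset.card_nbij (fun p => p.1 - R.sroot i)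
  · intro p hp
    rw [Finset.mem_coe, Finset.mem_filter] at hp
    obtain ⟨hpF, hpi⟩ := hp
    rw [gradedEdges, Finset.mem_filter, Finset.mem_product, graded_eq hn s 0] at hpF
    obtain ⟨⟨hp1, -⟩, hp3⟩ := hpF
    rw [hpi] at hp3
    rw [Finset.mem_filter] at hp1 hp3
    have hsubΔ : p.1 - R.sroot i ∈ R.Δ := Pos_subset hp3.1
    have hval := chain_pair hℓ hnorm (Pos_subset hp1.1) hαΔ hsubΔ
    simp only [Finset.mem_coe, Mset, Finset.mem_filter]
    refine ⟨Finset.mem_inter.mpr ⟨?_, hp3.1⟩, hval⟩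
    rw [Qzero, Finset.mem_filter]
    exact ⟨hsubΔ, (degn_zero_iff hn s hp3.1).mp hp3.2⟩
  · intro p₁ hp₁ p₂ hp₂ he
    simp only [Finset.mem_coe, Finset.mem_filter] at hp₁ hp₂
    have h1 : p₁.1 = p₂.1 := by
      have := congrArg (fun x => x + R.sroot i) he
      simpa using this
    exact Prod.ext h1 (by rw [hp₁.2, hp₂.2])
  · intro γ hγ
    simp only [Finset.mem_coe, Mset, Finset.mem_filter] at hγ
    obtain ⟨hγQP, hval⟩ := hγ
    have hγQ0 := (Finset.mem_inter.mp hγQP).1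
    have hγP : γ ∈ Pos R := (Finset.mem_inter.mp hγQP).2
    rw [Qzero, Finset.mem_filter] at hγQ0
    have hγΔ : γ ∈ R.Δ := hγQ0.1
    have haddΔ : γ + R.sroot i ∈ R.Δ :=
      add_mem' hℓ hnorm hγΔ hαΔ (by rw [dotProduct_comm]; exact hval)
    have haddP : γ + R.sroot i ∈ Pos R := pos_add_sroot hn hγP haddΔ
    have hsub : γ + R.sroot i - R.sroot i ∈ Pos R := by simpa using hγP
    have hd0 : degn R hn s γ = 0 := (degn_zero_iff hn s hγP).mpr hγQ0.2
    have hdadd : degn R hn s (γ + R.sroot i) = 0 := by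
      have h5 := degn_sub_sroot hn haddP hsub his
      rw [add_sub_cancel_right] at h5
      rw [← h5]
      exact hd0
    refine ⟨(γ + R.sroot i, i), ?_, by simp⟩
    rw [Finset.mem_coe, Finset.mem_filter]
    refine ⟨?_, rfl⟩
    rw [gradedEdges, Finset.mem_filter, Finset.mem_product, graded_eq hn s 0]
    refine ⟨⟨Finset.mem_filter.mpr ⟨haddP, hdadd⟩, hi⟩,
      Finset.mem_filter.mpr ⟨hsub, ?_⟩⟩
    rw [add_sub_cancel_right]
    exact hd0

lemma gradedEdges_zero_card :
    (gradedEdges R s 0).card = ∑ i ∈ sᶜ, (Mset R ℓ (Qzero R hn s) i).card := by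
  classical
  have hfib : (gradedEdges R s 0).card
      = ∑ i ∈ sᶜ, ((gradedEdges R s 0).filter (fun p => p.2 = i)).card := by
    apply Finset.card_eq_sum_card_fiberwise
    intro p hp
    rw [Finset.mem_coe, gradedEdges, Finset.mem_filter, Finset.mem_product] at hp
    exact hp.1.2
  rw [hfib]
  exact Finset.sum_congr rfl fun i hi => gradedEdges_zero_fiber hn hℓ hnorm s hi

end Bookkeeping

section Irred

variable {ℓ : ℝ} (hℓ : 0 < ℓ) (hnorm : ∀ γ ∈ R.Δ, γ ⬝ᵥ γ = ℓ)

include hℓ hnorm in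
lemma full_refl : ∀ β ∈ R.Δ, ∀ γ ∈ R.Δ, γ - ((2 * (β ⬝ᵥ γ) / ℓ) • β) ∈ R.Δ := by
  intro β hβ γ hγ
  have h := reflect_mem hβ hγ
  rwa [hnorm β hβ] at h

include hℓ hnorm in
lemma Bf_diag_const (i j : Fin n) :
    Bf R.Δ (R.sroot i) (R.sroot i) = Bf R.Δ (R.sroot j) (R.sroot j) := by
  classical
  set t := Finset.univ.filter
    (fun k => Bf R.Δ (R.sroot k) (R.sroot k) = Bf R.Δ (R.sroot i) (R.sroot i)) with ht
  have hortho : ∀ a ∈ t, ∀ b ∉ t, (∑ u, R.sroot a u * R.sroot b u) = 0 := by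
    intro a ha b hb
    by_contra hne
    rw [dp_sum] at hne
    have e1 := Bf_eigen hℓ hnorm (Finset.Subset.refl R.Δ) (full_refl hℓ hnorm)
      (R.sroot_mem a) (R.sroot b)
    have e2 := Bf_eigen hℓ hnorm (Finset.Subset.refl R.Δ) (full_refl hℓ hnorm)
      (R.sroot_mem b) (R.sroot a)
    have hBc : Bf R.Δ (R.sroot b) (R.sroot a) = Bf R.Δ (R.sroot a) (R.sroot b) :=
      Bf_comm _ _ _
    have hcomm : R.sroot b ⬝ᵥ R.sroot a = R.sroot a ⬝ᵥ R.sroot b := dotProduct_comm _ _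
    rw [hBc, hcomm] at e2
    have h12 : Bf R.Δ (R.sroot a) (R.sroot a) * (R.sroot a ⬝ᵥ R.sroot b)
        = Bf R.Δ (R.sroot b) (R.sroot b) * (R.sroot a ⬝ᵥ R.sroot b) := by
      rw [← e1, ← e2]
    have heq := mul_right_cancel₀ hne h12
    apply hb
    rw [ht, Finset.mem_filter]
    refine ⟨Finset.mem_univ b, ?_⟩
    rw [← heq]
    exact (Finset.mem_filter.mp ha).2
  rcases R.irreducible t hortho with h0 | hu
  · exfalso
    have : i ∈ t := by rw [ht, Finset.mem_filter]; exact ⟨Finset.mem_univ i, rfl⟩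
    rw [h0] at this
    exact absurd this (Finset.notMem_empty i)
  · have : j ∈ t := by rw [hu]; exact Finset.mem_univ j
    rw [ht, Finset.mem_filter] at this
    exact this.2.symm

end Irred

end SRS

/-- Let `g` be a simply-laced simple Lie algebra with a standard `ℤ`-grading determined
by coloring a subset `Π(1)` of `k` simple roots.  Then
`Σ_{i ≥ 1} (2·dim g(i) − #E(i)) = k·h`, where `h = |Δ|/n` is the Coxeter number.
(The sum over `i ≥ 1` is finite: `Δ(i) = ∅` for `i > |Δ|`.) -/
theorem standard_grading_sum_formula (n : ℕ) (hn : 0 < n) (R : SimpleRootSystem n)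
    (hsl : ∀ α ∈ R.Δ, ∀ β ∈ R.Δ, (∑ t, α t * α t) = (∑ t, β t * β t))
    (s : Finset (Fin n)) :
    ∑ d ∈ Finset.Icc 1 R.Δ.card,
        ((2 * (graded R s d).card : ℤ) - ((gradedEdges R s d).card : ℤ))
      = (s.card : ℤ) * ((R.Δ.card / n : ℕ) : ℤ) := by
  classical
  open SRS Matrix in
  set i0 : Fin n := ⟨0, hn⟩ with hi0
  set ℓ : ℝ := R.sroot i0 ⬝ᵥ R.sroot i0 with hℓdef
  have hα0 : R.sroot i0 ∈ R.Δ := R.sroot_mem _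
  have hℓnz : ℓ ≠ 0 := SRS.dp_ne_zero hα0
  have hℓnn : (0:ℝ) ≤ ℓ := Finset.sum_nonneg fun t _ => mul_self_nonneg _
  have hℓ : 0 < ℓ := lt_of_le_of_ne hℓnn (Ne.symm hℓnz)
  have hnorm : ∀ γ ∈ R.Δ, γ ⬝ᵥ γ = ℓ := fun γ h => hsl γ h _ hα0
  have hQΔ : R.Δ ⊆ R.Δ := Finset.Subset.refl _
  have hQneg : ∀ γ ∈ R.Δ, -γ ∈ R.Δ := fun γ h => SRS.neg_mem h
  have hQrefl := SRS.full_refl hℓ hnorm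
  -- all per-type edge counts in the full system agree
  set m := (SRS.Mset R ℓ R.Δ i0).card with hm
  have hℓ2 : ℓ^2 ≠ 0 := pow_ne_zero 2 hℓnz
  have hMeq : ∀ i : Fin n, (SRS.Mset R ℓ R.Δ i).card = m := by
    intro i
    have hB := SRS.Bf_diag_const hℓ hnorm i i0
    rw [SRS.Bf_diag hℓ hnorm hQΔ hQneg hQrefl hn (R.sroot_mem i),
        SRS.Bf_diag hℓ hnorm hQΔ hQneg hQrefl hn (R.sroot_mem i0)] at hB
    have h1 : ((SRS.Mset R ℓ R.Δ i).card : ℝ) * ℓ^2 = (m:ℝ) * ℓ^2 := by linarith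
    have h2 := mul_right_cancel₀ hℓ2 h1
    exact_mod_cast h2
  -- trace identity for the full system (s = ∅)
  have hfull := SRS.Mset_total hℓ hnorm hQΔ hQneg hQrefl hn (s := (∅ : Finset (Fin n)))
    (fun γ _ i hi => absurd hi (Finset.notMem_empty i)) (fun i _ => R.sroot_mem i)
  rw [Finset.compl_empty] at hfull
  have hinter : R.Δ ∩ SRS.Pos R = SRS.Pos R :=
    Finset.inter_eq_right.mpr (SRS.Pos_subset (R := R))
  rw [hinter] at hfull
  have hsumM : ∑ i : Fin n, (SRS.Mset R ℓ R.Δ i).card = n * m := by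
    rw [Finset.sum_congr rfl (fun i _ => hMeq i), Finset.sum_const, Finset.card_univ,
      Fintype.card_fin, smul_eq_mul]
  rw [hsumM, Finset.card_univ, Fintype.card_fin] at hfull
  -- hfull : n * m + 2 * n = 2 * (Pos R).card
  have hΔcard : R.Δ.card = n * (m + 2) := by
    have hd := SRS.card_Δ_double (R := R) hn
    rw [hd, ← hfull]; ring
  have hh : R.Δ.card / n = m + 2 := by
    rw [hΔcard]; exact Nat.mul_div_cancel_left _ hn
  -- the degree-zero subsystem
  set Q0 := SRS.Qzero R hn s with hQ0
  have hQ0Δ : Q0 ⊆ R.Δ := Finset.filter_subset _ _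
  have hQ0mem : ∀ γ, γ ∈ Q0 ↔ γ ∈ R.Δ ∧ ∀ j ∈ s, SRS.crd R hn γ j = 0 := by
    intro γ; rw [hQ0, SRS.Qzero, Finset.mem_filter]
  have hQ0neg : ∀ γ ∈ Q0, -γ ∈ Q0 := by
    intro γ h; rw [hQ0mem] at h ⊢
    exact ⟨SRS.neg_mem h.1, fun j hj => by rw [SRS.crd_neg, h.2 j hj, neg_zero]⟩
  have hQ0refl : ∀ β ∈ Q0, ∀ γ ∈ Q0, γ - ((2 * (β ⬝ᵥ γ) / ℓ) • β) ∈ Q0 := by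
    intro β hβ γ hγ
    rw [hQ0mem] at hβ hγ ⊢
    refine ⟨hQrefl β hβ.1 γ hγ.1, fun j hj => ?_⟩
    rw [SRS.crd_sub, SRS.crd_smul, hβ.2 j hj, hγ.2 j hj]
    ring
  have hQ0supp : ∀ γ ∈ Q0, ∀ j ∈ s, SRS.crd R hn γ j = 0 := by
    intro γ h; rw [hQ0mem] at h; exact h.2
  have hQ0sr : ∀ i ∈ sᶜ, R.sroot i ∈ Q0 := by
    intro i hi
    rw [hQ0mem]
    refine ⟨R.sroot_mem i, fun j hj => ?_⟩
    rw [SRS.crd_sroot]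
    rw [if_neg]
    intro he
    exact (Finset.mem_compl.mp hi) (he ▸ hj)
  have hQ0tot := SRS.Mset_total hℓ hnorm hQ0Δ hQ0neg hQ0refl hn hQ0supp hQ0sr
  have hQ0P : Q0 ∩ SRS.Pos R = graded R s 0 := SRS.Qzero_inter_Pos hn s
  rw [hQ0P] at hQ0tot
  -- bookkeeping
  have hV := SRS.sum_graded_cards hn hℓ hnorm s
  have hE := SRS.sum_gradedEdges_cards hn hℓ hnorm s
  have hEF := SRS.Fedges_card hn hℓ hnorm s
  have hE0 := SRS.gradedEdges_zero_card hn hℓ hnorm s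
  have hFm : (SRS.Fedges R s hn).card = sᶜ.card * m := by
    rw [hEF, Finset.sum_congr rfl (fun i _ => hMeq i), Finset.sum_const, smul_eq_mul]
  have hck : s.card + sᶜ.card = n := by
    rw [Finset.card_add_card_compl]
    exact Fintype.card_fin n
  -- assemble
  have hLHS : ∑ d ∈ Finset.Icc 1 R.Δ.card,
      ((2 * (graded R s d).card : ℤ) - ((gradedEdges R s d).card : ℤ))
      = 2 * ((∑ d ∈ Finset.Icc 1 R.Δ.card, (graded R s d).card : ℕ) : ℤ)
        - ((∑ d ∈ Finset.Icc 1 R.Δ.card, (gradedEdges R s d).card : ℕ) : ℤ) := by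
    rw [Finset.sum_sub_distrib, ← Finset.mul_sum]
    push_cast
    ring
  rw [hLHS, hh]
  -- integer versions of all counting identities
  have z1 : ((∑ d ∈ Finset.Icc 1 R.Δ.card, (graded R s d).card : ℕ) : ℤ)
      + ((graded R s 0).card : ℤ) = ((SRS.Pos R).card : ℤ) := by exact_mod_cast hV
  have z2 : ((∑ d ∈ Finset.Icc 1 R.Δ.card, (gradedEdges R s d).card : ℕ) : ℤ)
      + ((gradedEdges R s 0).card : ℤ) = ((SRS.Fedges R s hn).card : ℤ) := by
    exact_mod_cast hE
  have z3 : ((gradedEdges R s 0).card : ℤ)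
      = ((∑ i ∈ sᶜ, (SRS.Mset R ℓ Q0 i).card : ℕ) : ℤ) := by exact_mod_cast hE0
  have z4 : ((SRS.Fedges R s hn).card : ℤ) = (sᶜ.card : ℤ) * m := by exact_mod_cast hFm
  have z5 : ((∑ i ∈ sᶜ, (SRS.Mset R ℓ Q0 i).card : ℕ) : ℤ) + 2 * (sᶜ.card : ℤ)
      = 2 * ((graded R s 0).card : ℤ) := by exact_mod_cast hQ0tot
  have z6 : (n : ℤ) * m + 2 * n = 2 * ((SRS.Pos R).card : ℤ) := by exact_mod_cast hfull
  have z7 : (s.card : ℤ) + (sᶜ.card : ℤ) = n := by exact_mod_cast hck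
  push_cast at z1 z2 z3 z4 z5 z6 z7 ⊢
  linear_combination 2 * z1 - z2 + z3 - z4 + z5 - z6 - (m : ℤ) * z7 - 2 * z7
end

section
/- For the short Z-grading of sp_{2n} (type C_n) determined by the simple root α_n, one has 2·dim g(1) − #E(1) = 2n = h(C_n); concretely, g(1) is the representation S^2(ϖ_1) of gl_n with dim g(1) = n(n+1)/2 and #E(1) = n(n−1). -/
/-- The degree-1 piece `Δ(1)` of the short `ℤ`-grading of `sp_{2n}` (type `C_n`)
determined by the simple root `αₙ`: the positive roots `εᵢ + εⱼ` (`i ≤ j`, with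
`2εᵢ = εᵢ + εᵢ`), i.e. the weights of the `gl_n`-module `S²(ϖ₁)`, written in the
`ε`-basis of `ℤ^n`. -/
def deltaOneCn (n : ℕ) : Finset (Fin n → ℤ) :=
  ((Finset.univ ×ˢ Finset.univ : Finset (Fin n × Fin n)).filter
      (fun p => p.1 ≤ p.2)).image
    (fun p j => (if j = p.1 then (1 : ℤ) else 0) + (if j = p.2 then 1 else 0))

/-- The Hasse edges of `Δ(1)`: pairs `(μ, k)` with `μ ∈ Δ(1)`, `k < n` (the simple
roots of `g(0)' = sl_n` are `α_k = ε_k − ε_{k+1}`, `1 ≤ k ≤ n−1`), and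
`μ − α_k ∈ Δ(1)`. -/
def edgesOneCn (n : ℕ) : Finset ((Fin n → ℤ) × Fin n) :=
  (deltaOneCn n ×ˢ (Finset.univ : Finset (Fin n)).filter (fun k => k.val + 1 < n)).filter
    (fun p => (fun j => p.1 j -
      (if j = p.2 then (1 : ℤ) else if j.val = p.2.val + 1 then -1 else 0)) ∈ deltaOneCn n)

namespace ShortGradingCnAux

/-- The map from ordered pairs to weight vectors. -/
def fC (n : ℕ) (p : Fin n × Fin n) : Fin n → ℤ :=
  fun j => (if j = p.1 then (1 : ℤ) else 0) + (if j = p.2 then 1 else 0)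

/-- The set of ordered index pairs. -/
def SC (n : ℕ) : Finset (Fin n × Fin n) :=
  (Finset.univ ×ˢ Finset.univ).filter (fun p => p.1 ≤ p.2)

lemma delta_eq (n : ℕ) : deltaOneCn n = (SC n).image (fC n) := rfl

lemma aux_ge_one {n : ℕ} {x c d : Fin n}
    (h : (1 : ℤ) ≤ (if x = c then (1 : ℤ) else 0) + (if x = d then 1 else 0)) :
    x = c ∨ x = d := by
  split_ifs at h with h1 h2 h2
  · exact Or.inl h1
  · exact Or.inl h1
  · exact Or.inr h2
  · omega

lemma aux_self {n : ℕ} {c d x : Fin n} (hx : x = c ∨ x = d) :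
    (1 : ℤ) ≤ (if x = c then (1 : ℤ) else 0) + (if x = d then 1 else 0) := by
  rcases hx with rfl | rfl <;> split_ifs <;> omega

lemma f_injOn (n : ℕ) : Set.InjOn (fC n) (SC n) := by
  rintro ⟨a, b⟩ hp ⟨c, d⟩ hq h
  simp only [SC, Finset.coe_filter, Set.mem_setOf_eq, Fin.le_def] at hp hq
  have hab : (a : ℕ) ≤ b := hp.2
  have hcd : (c : ℕ) ≤ d := hq.2
  have H : ∀ x : Fin n,
      (if x = a then (1 : ℤ) else 0) + (if x = b then 1 else 0)
        = (if x = c then (1 : ℤ) else 0) + (if x = d then 1 else 0) :=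
    fun x => congrFun h x
  have h1 : a = c ∨ a = d := aux_ge_one (by rw [← H a]; exact aux_self (Or.inl rfl))
  have h2 : c = a ∨ c = b := aux_ge_one (by rw [H c]; exact aux_self (Or.inl rfl))
  have h3 : b = c ∨ b = d := aux_ge_one (by rw [← H b]; exact aux_self (Or.inr rfl))
  have h4 : d = a ∨ d = b := aux_ge_one (by rw [H d]; exact aux_self (Or.inr rfl))
  simp only [Fin.ext_iff] at h1 h2 h3 h4
  simp only [Prod.mk.injEq, Fin.ext_iff]
  omega

lemma delta_nonneg {n : ℕ} {v : Fin n → ℤ} (hv : v ∈ deltaOneCn n) (j : Fin n) :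
    0 ≤ v j := by
  rw [delta_eq, Finset.mem_image] at hv
  obtain ⟨p, _, rfl⟩ := hv
  simp only [fC]
  split_ifs <;> norm_num

lemma mem_delta_of_pair {n : ℕ} (a b : Fin n) (hab : a ≤ b) :
    fC n (a, b) ∈ deltaOneCn n := by
  rw [delta_eq, Finset.mem_image]
  exact ⟨(a, b), by simp [SC, hab], rfl⟩

lemma edge_iff {n : ℕ} {μ : Fin n → ℤ} (hμ : μ ∈ deltaOneCn n) {k : Fin n}
    (hk : k.val + 1 < n) :
    ((fun j => μ j - (if j = k then (1 : ℤ) else if j.val = k.val + 1 then -1 else 0))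
      ∈ deltaOneCn n) ↔ 1 ≤ μ k := by
  constructor
  · intro hν
    have h2 : (0 : ℤ) ≤ μ k - 1 := by simpa using delta_nonneg hν k
    omega
  · intro h1
    rw [delta_eq, Finset.mem_image] at hμ
    obtain ⟨⟨a, b⟩, hab, rfl⟩ := hμ
    simp only [SC, Finset.mem_filter, Fin.le_def] at hab
    have hab' : (a : ℕ) ≤ b := hab.2
    have hb : (b : ℕ) < n := b.isLt
    have hkab : k = a ∨ k = b := by
      simp only [fC] at h1
      exact aux_ge_one h1
    rcases hkab with hka | hkb
    · subst hka
      by_cases hb' : k = b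
      · subst hb'
        have hrw : (fun j => fC n (k, k) j -
            (if j = k then (1 : ℤ) else if j.val = k.val + 1 then -1 else 0))
            = fC n (k, ⟨k.val + 1, hk⟩) := by
          funext j
          simp only [fC, Fin.ext_iff]
          split_ifs <;> omega
        rw [hrw]
        exact mem_delta_of_pair _ _ (by simp [Fin.le_def])
      · have hlt : (k : ℕ) < b := lt_of_le_of_ne hab' (fun h => hb' (Fin.ext h))
        have hrw : (fun j => fC n (k, b) j -
            (if j = k then (1 : ℤ) else if j.val = k.val + 1 then -1 else 0))
            = fC n (⟨k.val + 1, by omega⟩, b) := by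
          funext j
          simp only [fC, Fin.ext_iff]
          split_ifs <;> omega
        rw [hrw]
        exact mem_delta_of_pair _ _ (by simp only [Fin.le_def]; omega)
    · subst hkb
      have hrw : (fun j => fC n (a, k) j -
          (if j = k then (1 : ℤ) else if j.val = k.val + 1 then -1 else 0))
          = fC n (a, ⟨k.val + 1, hk⟩) := by
        funext j
        simp only [fC, Fin.ext_iff]
        split_ifs <;> omega
      rw [hrw]
      exact mem_delta_of_pair _ _ (by simp only [Fin.le_def]; omega)

lemma edges_eq (n : ℕ) : edgesOneCn n =
    (deltaOneCn n ×ˢ (Finset.univ : Finset (Fin n)).filter (fun k => k.val + 1 < n)).filter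
      (fun p => 1 ≤ p.1 p.2) := by
  unfold edgesOneCn
  apply Finset.filter_congr
  rintro ⟨μ, k⟩ hp
  rw [Finset.mem_product, Finset.mem_filter] at hp
  exact edge_iff hp.1 hp.2.2

lemma card_SC (n : ℕ) : (SC n).card = n * (n + 1) / 2 := by
  have hD : (((Finset.univ ×ˢ Finset.univ : Finset (Fin n × Fin n))).filter
        (fun p => p.2 < p.1)).card
      = (((Finset.univ ×ˢ Finset.univ : Finset (Fin n × Fin n))).filter
        (fun p => p.1 < p.2)).card := by
    apply Finset.card_nbij' (fun p => (p.2, p.1)) (fun p => (p.2, p.1))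
    · rintro ⟨a, b⟩ ha
      simp only [Finset.mem_coe, Finset.mem_filter, Finset.mem_product, Finset.mem_univ, true_and] at ha ⊢
      exact ha
    · rintro ⟨a, b⟩ ha
      simp only [Finset.mem_coe, Finset.mem_filter, Finset.mem_product, Finset.mem_univ, true_and] at ha ⊢
      exact ha
    · rintro ⟨a, b⟩ _; rfl
    · rintro ⟨a, b⟩ _; rfl
  have hdiag : (((Finset.univ ×ˢ Finset.univ : Finset (Fin n × Fin n))).filter
      (fun p => p.1 = p.2)).card = n := by
    have : (((Finset.univ ×ˢ Finset.univ : Finset (Fin n × Fin n))).filter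
        (fun p => p.1 = p.2)).card = (Finset.univ : Finset (Fin n)).card := by
      apply Finset.card_nbij' (fun p => p.1) (fun i => (i, i))
      · intro p _; exact Finset.mem_univ _
      · intro i _
        simp only [Finset.mem_coe, Finset.mem_filter, Finset.mem_product, Finset.mem_univ, true_and]
      · rintro ⟨a, b⟩ hp
        simp only [Finset.mem_coe, Finset.mem_filter, Finset.mem_product, Finset.mem_univ, true_and] at hp
        rw [hp]
      · intro i _; rfl
    simpa using this
  have hsum1 : (SC n).card
      + (((Finset.univ ×ˢ Finset.univ : Finset (Fin n × Fin n))).filter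
          (fun p => p.2 < p.1)).card = n * n := by
    rw [SC, Finset.card_filter, Finset.card_filter, ← Finset.sum_add_distrib]
    have hone : ∀ p ∈ (Finset.univ ×ˢ Finset.univ : Finset (Fin n × Fin n)),
        ((if p.1 ≤ p.2 then 1 else 0) + (if p.2 < p.1 then 1 else 0) : ℕ) = 1 := by
      rintro ⟨a, b⟩ _
      simp only [Fin.le_def, Fin.lt_def]
      split_ifs <;> omega
    rw [Finset.sum_congr rfl hone, Finset.sum_const, smul_eq_mul, mul_one]
    simp
  have hsum2 : (SC n).card
      = (((Finset.univ ×ˢ Finset.univ : Finset (Fin n × Fin n))).filter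
          (fun p => p.1 < p.2)).card + n := by
    have hdisj : Disjoint
        (((Finset.univ ×ˢ Finset.univ : Finset (Fin n × Fin n))).filter (fun p => p.1 < p.2))
        (((Finset.univ ×ˢ Finset.univ : Finset (Fin n × Fin n))).filter (fun p => p.1 = p.2)) := by
      rw [Finset.disjoint_left]
      intro p hp1 hp2
      rw [Finset.mem_filter] at hp1 hp2
      exact absurd hp2.2 (ne_of_lt hp1.2)
    have hun : SC n
        = (((Finset.univ ×ˢ Finset.univ : Finset (Fin n × Fin n))).filter (fun p => p.1 < p.2))
          ∪ (((Finset.univ ×ˢ Finset.univ : Finset (Fin n × Fin n))).filter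
              (fun p => p.1 = p.2)) := by
      ext p
      simp only [SC, Finset.mem_union, Finset.mem_filter, Finset.mem_product,
        Finset.mem_univ, true_and]
      constructor
      · intro h
        rcases lt_or_eq_of_le h with h | h
        exacts [Or.inl h, Or.inr h]
      · rintro (h | h)
        exacts [le_of_lt h, le_of_eq h]
    rw [hun, Finset.card_union_of_disjoint hdisj, hdiag]
  have hmul : n * (n + 1) = n * n + n := by ring
  rw [hmul]
  set N := n * n with hN
  clear_value N
  omega

lemma card_delta (n : ℕ) : (deltaOneCn n).card = n * (n + 1) / 2 := by
  rw [delta_eq, Finset.card_image_of_injOn (f_injOn n), card_SC]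

lemma card_fiber (n : ℕ) (k : Fin n) :
    ((deltaOneCn n).filter (fun μ => 1 ≤ μ k)).card = n := by
  rw [delta_eq, Finset.filter_image,
    Finset.card_image_of_injOn ((f_injOn n).mono (by
      intro x hx
      exact Finset.mem_coe.mpr (Finset.filter_subset _ _ (Finset.mem_coe.mp hx))))]
  have hpred : (SC n).filter (fun p => 1 ≤ fC n p k)
      = (SC n).filter (fun p => p.1 = k ∨ p.2 = k) := by
    apply Finset.filter_congr
    rintro ⟨a, b⟩ _
    simp only [fC]
    constructor
    · intro h1
      rcases aux_ge_one h1 with h | h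
      · exact Or.inl h.symm
      · exact Or.inr h.symm
    · rintro (rfl | rfl)
      · exact aux_self (Or.inl rfl)
      · exact aux_self (Or.inr rfl)
  rw [hpred]
  have hbij : ((SC n).filter (fun p => p.1 = k ∨ p.2 = k)).card
      = (Finset.univ : Finset (Fin n)).card := by
    apply Finset.card_nbij' (fun p => if p.1 = k then p.2 else p.1)
      (fun m => if k ≤ m then (k, m) else (m, k))
    · intros _ _; exact Finset.mem_univ _
    · intro m _
      simp only [SC, Finset.mem_coe, Finset.mem_filter, Finset.mem_product, Finset.mem_univ, true_and]
      split_ifs with h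
      · exact ⟨h, Or.inl rfl⟩
      · exact ⟨le_of_not_ge h, Or.inr rfl⟩
    · rintro ⟨a, b⟩ hp
      simp only [SC, Finset.mem_coe, Finset.mem_filter, Finset.mem_product, Finset.mem_univ, true_and] at hp
      obtain ⟨hab, hk⟩ := hp
      by_cases h1 : a = k
      · subst h1
        simp [hab]
      · have hbk : b = k := hk.resolve_left h1
        subst hbk
        have hba : ¬ b ≤ a := fun hba => h1 (le_antisymm hab hba)
        simp [h1, hba]
    · intro m _
      by_cases h : k ≤ m
      · simp [h]
      · have hm : m ≠ k := fun he => h (le_of_eq he.symm)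
        simp [h, hm]
  rw [hbij]
  simp

lemma card_K (n : ℕ) (hn : 1 ≤ n) :
    ((Finset.univ : Finset (Fin n)).filter (fun k => k.val + 1 < n)).card = n - 1 := by
  have h := Finset.card_filter_add_card_filter_not
    (s := (Finset.univ : Finset (Fin n))) (p := fun k : Fin n => k.val + 1 < n)
  have hneg : ((Finset.univ : Finset (Fin n)).filter (fun k => ¬ k.val + 1 < n))
      = {⟨n - 1, by omega⟩} := by
    ext k
    simp only [Finset.mem_filter, Finset.mem_univ, true_and, not_lt, Finset.mem_singleton,
      Fin.ext_iff]
    have := k.isLt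
    omega
  rw [hneg] at h
  simp only [Finset.card_singleton, Finset.card_univ, Fintype.card_fin] at h
  omega

lemma card_edges (n : ℕ) (hn : 1 ≤ n) : (edgesOneCn n).card = n * (n - 1) := by
  rw [edges_eq, Finset.card_filter, Finset.sum_product_right]
  have hfib : ∀ k ∈ (Finset.univ : Finset (Fin n)).filter (fun k => k.val + 1 < n),
      (∑ μ ∈ deltaOneCn n, if 1 ≤ (μ, k).1 (μ, k).2 then 1 else 0) = n := by
    intro k _
    rw [← Finset.card_filter]
    exact card_fiber n k
  rw [Finset.sum_congr rfl hfib, Finset.sum_const, card_K n hn, smul_eq_mul]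
  ring

end ShortGradingCnAux

/-- For the short `ℤ`-grading of `sp_{2n}` (type `C_n`) determined by `αₙ`, the
`gl_n`-module `g(1) ≅ S²(ϖ₁)` has `dim g(1) = n(n+1)/2`, `#E(1) = n(n−1)`, and
`2·dim g(1) − #E(1) = 2n = h(C_n)`. -/
theorem short_grading_Cn (n : ℕ) (hn : 1 ≤ n) :
    (deltaOneCn n).card = n * (n + 1) / 2 ∧
    (edgesOneCn n).card = n * (n - 1) ∧
    2 * (deltaOneCn n).card - (edgesOneCn n).card = 2 * n := by
  refine ⟨ShortGradingCnAux.card_delta n, ShortGradingCnAux.card_edges n hn, ?_⟩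
  rw [ShortGradingCnAux.card_delta n, ShortGradingCnAux.card_edges n hn]
  have h1 : n * (n + 1) = n * n + n := by ring
  have h2 : n * (n - 1) + n = n * n := by
    cases n with
    | zero => simp
    | succ m => simp only [Nat.succ_sub_one]; ring
  have hev : Even (n * n + n) := by rw [← h1]; exact Nat.even_mul_succ_self n
  rw [Nat.even_iff] at hev
  rw [h1]
  set N := n * n with hN
  clear_value N
  set M := n * (n - 1) with hM
  clear_value M
  omega
end

section
/- For the Z_2-grading of so_{2n} (type D_n) obtained by coloring the vertex α_k (2 ≤ k ≤ n−2) of the extended Dynkin diagram, g_0 = so_{2k}×so_{2(n−k)}, g_1 is the tensor product of the two tautological representations, and 2·dim g_1 = #E_1; explicitly dim g_1 = 4k(n−k) and #E_1 = 8k(n−k). -/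
/-- The set of weights of `g₁` for the `ℤ₂`-grading of `so_{2n}` (type `D_n`) obtained
by coloring the vertex `α_k` of the extended Dynkin diagram: the roots `±ε_a ± ε_b`
with `a` in the first block `{1,…,k}` and `b` in the second block `{k+1,…,n}` (written
0-based in the `ε`-basis of `ℤ^n`).  As a `g₀ = so_{2k} × so_{2(n−k)}`-module, `g₁` is
the tensor product of the two tautological representations. -/
def gOneDn (n k : ℕ) : Finset (Fin n → ℤ) :=
  ((Finset.univ : Finset (Fin n × Fin n × Bool × Bool)).filter
      (fun q => q.1.val < k ∧ k ≤ q.2.1.val)).image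
    (fun q j => (if j = q.1 then (if q.2.2.1 then (1 : ℤ) else -1) else 0) +
                (if j = q.2.1 then (if q.2.2.2 then 1 else -1) else 0))

/-- The simple roots of `g₀ = so_{2k} × so_{2(n−k)}` (0-based): for the first factor
`D_k` the roots `εᵢ − εᵢ₊₁` (`i + 1 < k`) and `ε_{k-2} + ε_{k-1}`; for the second
factor `D_{n−k}` the roots `εⱼ − εⱼ₊₁` (`k ≤ j`, `j + 1 < n`) and `ε_{n-2} + ε_{n-1}`. -/
def simpleRootsG0Dn (n k : ℕ) : Finset (Fin n → ℤ) :=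
  Finset.image (fun i : Fin n => fun j : Fin n =>
    if i.val + 1 = k then (if j.val + 2 = k ∨ j.val + 1 = k then (1 : ℤ) else 0)
    else if i.val + 1 = n then (if j.val + 2 = n ∨ j.val + 1 = n then 1 else 0)
    else if j = i then 1 else if j.val = i.val + 1 then -1 else 0) Finset.univ

/-- The Hasse edges of the weight poset of `g₁`: pairs `(μ, α)` with `μ` a weight of
`g₁`, `α` a simple root of `g₀`, and `μ − α` again a weight of `g₁`. -/
def edgesOneDn (n k : ℕ) : Finset ((Fin n → ℤ) × (Fin n → ℤ)) :=
  (gOneDn n k ×ˢ simpleRootsG0Dn n k).filter (fun p => p.1 - p.2 ∈ gOneDn n k)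

namespace Z2DnAux

def wfun {n : ℕ} (a b : Fin n) (s t : Bool) : Fin n → ℤ :=
  fun j => (if j = a then (if s then (1 : ℤ) else -1) else 0) +
           (if j = b then (if t then 1 else -1) else 0)

def rootFn (n k : ℕ) (i : Fin n) : Fin n → ℤ :=
  fun j => if i.val + 1 = k then (if j.val + 2 = k ∨ j.val + 1 = k then (1 : ℤ) else 0)
    else if i.val + 1 = n then (if j.val + 2 = n ∨ j.val + 1 = n then 1 else 0)
    else if j = i then 1 else if j.val = i.val + 1 then -1 else 0

lemma wfun_apply {n : ℕ} (a b : Fin n) (s t : Bool) (j : Fin n) :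
    wfun a b s t j = (if j.val = a.val then (if s then (1 : ℤ) else -1) else 0) +
      (if j.val = b.val then (if t then 1 else -1) else 0) := by
  simp [wfun, Fin.ext_iff]

lemma rootFn_apply (n k : ℕ) (i j : Fin n) : rootFn n k i j =
    if i.val + 1 = k then (if j.val + 2 = k ∨ j.val + 1 = k then (1 : ℤ) else 0)
    else if i.val + 1 = n then (if j.val + 2 = n ∨ j.val + 1 = n then 1 else 0)
    else if j.val = i.val then 1 else if j.val = i.val + 1 then -1 else 0 := by
  simp [rootFn, Fin.ext_iff]

lemma mem_gOne {n k : ℕ} {μ : Fin n → ℤ} :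
    μ ∈ gOneDn n k ↔ ∃ (a b : Fin n) (s t : Bool),
      a.val < k ∧ k ≤ b.val ∧ μ = wfun a b s t := by
  constructor
  · intro h
    obtain ⟨q, hq, rfl⟩ := Finset.mem_image.1 h
    obtain ⟨-, h1, h2⟩ := Finset.mem_filter.1 hq
    exact ⟨q.1, q.2.1, q.2.2.1, q.2.2.2, h1, h2, rfl⟩
  · rintro ⟨a, b, s, t, h1, h2, rfl⟩
    exact Finset.mem_image.2 ⟨(a, b, s, t),
      Finset.mem_filter.2 ⟨Finset.mem_univ _, h1, h2⟩, rfl⟩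

lemma mem_roots {n k : ℕ} {α : Fin n → ℤ} :
    α ∈ simpleRootsG0Dn n k ↔ ∃ i : Fin n, α = rootFn n k i := by
  constructor
  · intro h
    obtain ⟨i, -, rfl⟩ := Finset.mem_image.1 h
    exact ⟨i, rfl⟩
  · rintro ⟨i, rfl⟩
    exact Finset.mem_image.2 ⟨i, Finset.mem_univ _, rfl⟩

lemma val_mem {n k : ℕ} {μ : Fin n → ℤ} (h : μ ∈ gOneDn n k) (j : Fin n) :
    μ j = -1 ∨ μ j = 0 ∨ μ j = 1 := by
  obtain ⟨a, b, s, t, ha, hb, rfl⟩ := mem_gOne.1 h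
  rw [wfun_apply]
  split_ifs <;> omega

lemma first_block {n k : ℕ} {μ : Fin n → ℤ} (h : μ ∈ gOneDn n k) {j1 j2 : Fin n}
    (h12 : j1.val ≠ j2.val) (hj1 : j1.val < k) (hj2 : j2.val < k) :
    μ j1 = 0 ∨ μ j2 = 0 := by
  obtain ⟨a, b, s, t, ha, hb, rfl⟩ := mem_gOne.1 h
  rw [wfun_apply, wfun_apply]
  split_ifs <;> omega

lemma second_block {n k : ℕ} {μ : Fin n → ℤ} (h : μ ∈ gOneDn n k) {j1 j2 : Fin n}
    (h12 : j1.val ≠ j2.val) (hj1 : k ≤ j1.val) (hj2 : k ≤ j2.val) :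
    μ j1 = 0 ∨ μ j2 = 0 := by
  obtain ⟨a, b, s, t, ha, hb, rfl⟩ := mem_gOne.1 h
  rw [wfun_apply, wfun_apply]
  split_ifs <;> omega

lemma wfun_inj {n k : ℕ} {a b a' b' : Fin n} {s t s' t' : Bool}
    (ha : a.val < k) (hb : k ≤ b.val) (ha' : a'.val < k) (hb' : k ≤ b'.val)
    (h : wfun a b s t = wfun a' b' s' t') : a = a' ∧ b = b' ∧ s = s' ∧ t = t' := by
  have h1 : (if s then (1:ℤ) else -1) = (if a.val = a'.val then (if s' then (1:ℤ) else -1) else 0) := by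
    have h0 := congrFun h a
    rw [wfun_apply, wfun_apply, if_pos rfl, if_neg (show ¬ a.val = b.val by omega),
      if_neg (show ¬ a.val = b'.val by omega)] at h0
    simpa using h0
  have h2 : (if t then (1:ℤ) else -1) = (if b.val = b'.val then (if t' then (1:ℤ) else -1) else 0) := by
    have h0 := congrFun h b
    rw [wfun_apply, wfun_apply, if_pos rfl, if_neg (show ¬ b.val = a'.val by omega)] at h0
    rw [show (if b.val = a.val then (if s then (1:ℤ) else -1) else 0) = 0 from
      if_neg (by omega)] at h0
    simpa using h0
  have e1 : a.val = a'.val ∧ s = s' := by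
    rcases eq_or_ne a.val a'.val with e | e
    · rw [if_pos e] at h1; cases s <;> cases s' <;> simp_all
    · rw [if_neg e] at h1; cases s <;> simp_all
  have e2 : b.val = b'.val ∧ t = t' := by
    rcases eq_or_ne b.val b'.val with e | e
    · rw [if_pos e] at h2; cases t <;> cases t' <;> simp_all
    · rw [if_neg e] at h2; cases t <;> simp_all
  exact ⟨Fin.ext e1.1, Fin.ext e2.1, e1.2, e2.2⟩

lemma root_inj {n k : ℕ} (hk : 2 ≤ k) (hkn : k + 2 ≤ n) {i i' : Fin n}
    (h : rootFn n k i = rootFn n k i') : i = i' := by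
  have key : ∀ j : Fin n, rootFn n k i j = rootFn n k i' j := congrFun h
  have hi := i.isLt
  have hi' := i'.isLt
  by_cases h1 : i.val + 1 = k
  · by_cases h1' : i'.val + 1 = k
    · exact Fin.ext (by omega)
    · by_cases h2' : i'.val + 1 = n
      · -- β1 vs β2 : evaluate at k-1
        have e := key ⟨k - 1, by omega⟩
        rw [rootFn_apply, rootFn_apply] at e
        simp only at e
        split_ifs at e <;> omega
      · -- β1 vs chain : evaluate at i'+1 : chain gives -1, β1 gives 0 or 1
        have e := key ⟨i'.val + 1, by omega⟩
        rw [rootFn_apply, rootFn_apply] at e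
        simp only at e
        split_ifs at e <;> omega
  · by_cases h2 : i.val + 1 = n
    · by_cases h1' : i'.val + 1 = k
      · have e := key ⟨k - 1, by omega⟩
        rw [rootFn_apply, rootFn_apply] at e
        simp only at e
        split_ifs at e <;> omega
      · by_cases h2' : i'.val + 1 = n
        · exact Fin.ext (by omega)
        · have e := key ⟨i'.val + 1, by omega⟩
          rw [rootFn_apply, rootFn_apply] at e
          simp only at e
          split_ifs at e <;> omega
    · by_cases h1' : i'.val + 1 = k
      · have e := key ⟨i.val + 1, by omega⟩
        rw [rootFn_apply, rootFn_apply] at e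
        simp only at e
        split_ifs at e <;> omega
      · by_cases h2' : i'.val + 1 = n
        · have e := key ⟨i.val + 1, by omega⟩
          rw [rootFn_apply, rootFn_apply] at e
          simp only at e
          split_ifs at e <;> omega
        · -- chain vs chain : evaluate at i
          have e := key i
          rw [rootFn_apply, rootFn_apply] at e
          simp only at e
          split_ifs at e <;> exact Fin.ext (by omega)

def Cc (n k : ℕ) (q : Fin n × Fin n × Fin n × Bool × Bool) : Prop :=
  q.2.1.val < k ∧ k ≤ q.2.2.1.val ∧
  (if q.1.val + 1 = k then q.2.2.2.1 = true ∧ (q.2.1.val + 2 = k ∨ q.2.1.val + 1 = k)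
   else if q.1.val + 1 = n then
     q.2.2.2.2 = true ∧ (q.2.2.1.val + 2 = n ∨ q.2.2.1.val + 1 = n)
   else if q.1.val + 1 < k then
     ((q.2.1.val = q.1.val ∧ q.2.2.2.1 = true) ∨ (q.2.1.val = q.1.val + 1 ∧ q.2.2.2.1 = false))
   else ((q.2.2.1.val = q.1.val ∧ q.2.2.2.2 = true) ∨
     (q.2.2.1.val = q.1.val + 1 ∧ q.2.2.2.2 = false)))

instance (n k : ℕ) : DecidablePred (Cc n k) := fun q => by unfold Cc; infer_instance

def Dset (n k : ℕ) : Finset (Fin n × Fin n × Fin n × Bool × Bool) :=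
  Finset.univ.filter (Cc n k)

def psi (n k : ℕ) (q : Fin n × Fin n × Fin n × Bool × Bool) :
    (Fin n → ℤ) × (Fin n → ℤ) :=
  (wfun q.2.1 q.2.2.1 q.2.2.2.1 q.2.2.2.2, rootFn n k q.1)

lemma sub_mem {n k : ℕ} (hk : 2 ≤ k) (hkn : k + 2 ≤ n)
    {q : Fin n × Fin n × Fin n × Bool × Bool} (hq : Cc n k q) :
    wfun q.2.1 q.2.2.1 q.2.2.2.1 q.2.2.2.2 - rootFn n k q.1 ∈ gOneDn n k := by
  obtain ⟨i, a, b, s, t⟩ := q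
  obtain ⟨ha, hb, hc⟩ := hq
  simp only at ha hb hc ⊢
  have hi := i.isLt
  by_cases h1 : i.val + 1 = k
  · rw [if_pos h1] at hc
    obtain ⟨hs, hor⟩ := hc
    rcases hor with h | h
    · refine mem_gOne.2 ⟨⟨k - 1, by omega⟩, b, false, t, by simp only [Fin.val_mk]; omega, hb, ?_⟩
      funext j
      simp only [Pi.sub_apply, wfun_apply, rootFn_apply, Fin.val_mk, hs]
      split_ifs <;> first | omega | tauto
    · refine mem_gOne.2 ⟨⟨k - 2, by omega⟩, b, false, t, by simp only [Fin.val_mk]; omega, hb, ?_⟩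
      funext j
      simp only [Pi.sub_apply, wfun_apply, rootFn_apply, Fin.val_mk, hs]
      split_ifs <;> first | omega | tauto
  · rw [if_neg h1] at hc
    by_cases h2 : i.val + 1 = n
    · rw [if_pos h2] at hc
      obtain ⟨ht, hor⟩ := hc
      rcases hor with h | h
      · refine mem_gOne.2 ⟨a, ⟨n - 1, by omega⟩, s, false, ha, by simp only [Fin.val_mk]; omega, ?_⟩
        funext j
        simp only [Pi.sub_apply, wfun_apply, rootFn_apply, Fin.val_mk, ht]
        split_ifs <;> first | omega | tauto
      · refine mem_gOne.2 ⟨a, ⟨n - 2, by omega⟩, s, false, ha, by simp only [Fin.val_mk]; omega, ?_⟩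
        funext j
        simp only [Pi.sub_apply, wfun_apply, rootFn_apply, Fin.val_mk, ht]
        split_ifs <;> first | omega | tauto
    · rw [if_neg h2] at hc
      by_cases h3 : i.val + 1 < k
      · rw [if_pos h3] at hc
        rcases hc with ⟨hai, hs⟩ | ⟨hai, hs⟩
        · refine mem_gOne.2 ⟨⟨i.val + 1, by omega⟩, b, true, t, by simp only [Fin.val_mk]; omega, hb, ?_⟩
          funext j
          simp only [Pi.sub_apply, wfun_apply, rootFn_apply, Fin.val_mk, hs]
          split_ifs <;> first | omega | tauto
        · refine mem_gOne.2 ⟨i, b, false, t, by omega, hb, ?_⟩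
          funext j
          simp only [Pi.sub_apply, wfun_apply, rootFn_apply, Fin.val_mk, hs]
          split_ifs <;> first | omega | tauto
      · rw [if_neg h3] at hc
        rcases hc with ⟨hbi, ht⟩ | ⟨hbi, ht⟩
        · refine mem_gOne.2 ⟨a, ⟨i.val + 1, by omega⟩, s, true, ha, by simp only [Fin.val_mk]; omega, ?_⟩
          funext j
          simp only [Pi.sub_apply, wfun_apply, rootFn_apply, Fin.val_mk, ht]
          split_ifs <;> first | omega | tauto
        · refine mem_gOne.2 ⟨a, i, s, false, ha, by omega, ?_⟩
          funext j
          simp only [Pi.sub_apply, wfun_apply, rootFn_apply, Fin.val_mk, ht]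
          split_ifs <;> first | omega | tauto

lemma edge_classify {n k : ℕ} (hk : 2 ≤ k) (hkn : k + 2 ≤ n) {i a b : Fin n} {s t : Bool}
    (ha : a.val < k) (hb : k ≤ b.val)
    (hsub : wfun a b s t - rootFn n k i ∈ gOneDn n k) : Cc n k (i, a, b, s, t) := by
  refine ⟨ha, hb, ?_⟩
  simp only
  have hi := i.isLt
  by_cases h1 : i.val + 1 = k
  · rw [if_pos h1]
    have hor : a.val + 2 = k ∨ a.val + 1 = k := by
      by_contra hna
      have h0 := first_block hsub (j1 := ⟨k - 2, by omega⟩) (j2 := ⟨k - 1, by omega⟩)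
        (by simp only [Fin.val_mk]; omega) (by simp only [Fin.val_mk]; omega)
        (by simp only [Fin.val_mk]; omega)
      rcases h0 with h0 | h0 <;>
        (simp only [Pi.sub_apply, wfun_apply, rootFn_apply, Fin.val_mk] at h0;
          split_ifs at h0 <;> omega)
    refine ⟨?_, hor⟩
    cases s
    · exfalso
      have e := val_mem hsub a
      simp only [Pi.sub_apply, wfun_apply, rootFn_apply] at e
      split_ifs at e <;> first | omega | contradiction
    · rfl
  · rw [if_neg h1]
    by_cases h2 : i.val + 1 = n
    · rw [if_pos h2]
      have hor : b.val + 2 = n ∨ b.val + 1 = n := by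
        by_contra hnb
        have h0 := second_block hsub (j1 := ⟨n - 2, by omega⟩) (j2 := ⟨n - 1, by omega⟩)
          (by simp only [Fin.val_mk]; omega) (by simp only [Fin.val_mk]; omega)
          (by simp only [Fin.val_mk]; omega)
        rcases h0 with h0 | h0 <;>
          (simp only [Pi.sub_apply, wfun_apply, rootFn_apply, Fin.val_mk] at h0;
            split_ifs at h0 <;> omega)
      refine ⟨?_, hor⟩
      cases t
      · exfalso
        have e := val_mem hsub b
        simp only [Pi.sub_apply, wfun_apply, rootFn_apply] at e
        split_ifs at e <;> first | omega | contradiction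
      · rfl
    · rw [if_neg h2]
      by_cases h3 : i.val + 1 < k
      · rw [if_pos h3]
        by_cases hai : a.val = i.val
        · refine Or.inl ⟨hai, ?_⟩
          cases s
          · exfalso
            have e := val_mem hsub a
            simp only [Pi.sub_apply, wfun_apply, rootFn_apply] at e
            split_ifs at e <;> first | omega | contradiction
          · rfl
        · by_cases hai1 : a.val = i.val + 1
          · refine Or.inr ⟨hai1, ?_⟩
            cases s
            · rfl
            · exfalso
              have e := val_mem hsub a
              simp only [Pi.sub_apply, wfun_apply, rootFn_apply] at e
              split_ifs at e <;> first | omega | contradiction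
          · exfalso
            have h0 := first_block hsub (j1 := i) (j2 := ⟨i.val + 1, by omega⟩)
              (by simp only [Fin.val_mk]; omega) (by omega)
              (by simp only [Fin.val_mk]; omega)
            rcases h0 with h0 | h0 <;>
              (simp only [Pi.sub_apply, wfun_apply, rootFn_apply, Fin.val_mk] at h0;
                split_ifs at h0 <;> omega)
      · rw [if_neg h3]
        have hik : k ≤ i.val := by omega
        by_cases hbi : b.val = i.val
        · refine Or.inl ⟨hbi, ?_⟩
          cases t
          · exfalso
            have e := val_mem hsub b
            simp only [Pi.sub_apply, wfun_apply, rootFn_apply] at e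
            split_ifs at e <;> first | omega | contradiction
          · rfl
        · by_cases hbi1 : b.val = i.val + 1
          · refine Or.inr ⟨hbi1, ?_⟩
            cases t
            · rfl
            · exfalso
              have e := val_mem hsub b
              simp only [Pi.sub_apply, wfun_apply, rootFn_apply] at e
              split_ifs at e <;> first | omega | contradiction
          · exfalso
            have h0 := second_block hsub (j1 := i) (j2 := ⟨i.val + 1, by omega⟩)
              (by simp only [Fin.val_mk]; omega) (by omega)
              (by simp only [Fin.val_mk]; omega)
            rcases h0 with h0 | h0 <;>
              (simp only [Pi.sub_apply, wfun_apply, rootFn_apply, Fin.val_mk] at h0;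
                split_ifs at h0 <;> omega)

lemma edges_eq_image {n k : ℕ} (hk : 2 ≤ k) (hkn : k + 2 ≤ n) :
    edgesOneDn n k = (Dset n k).image (psi n k) := by
  ext p
  constructor
  · intro hp
    obtain ⟨hmem, hsub⟩ := Finset.mem_filter.1 hp
    obtain ⟨hμ, hα⟩ := Finset.mem_product.1 hmem
    obtain ⟨a, b, s, t, ha, hb, hw⟩ := mem_gOne.1 hμ
    obtain ⟨i, hr⟩ := mem_roots.1 hα
    refine Finset.mem_image.2 ⟨(i, a, b, s, t), Finset.mem_filter.2 ⟨Finset.mem_univ _, ?_⟩, ?_⟩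
    · exact edge_classify hk hkn ha hb (by rw [← hw, ← hr]; exact hsub)
    · simp only [psi]
      rw [← hw, ← hr]
  · intro hp
    obtain ⟨q, hq, rfl⟩ := Finset.mem_image.1 hp
    have hc : Cc n k q := (Finset.mem_filter.1 hq).2
    refine Finset.mem_filter.2 ⟨Finset.mem_product.2 ⟨?_, ?_⟩, ?_⟩
    · exact mem_gOne.2 ⟨q.2.1, q.2.2.1, q.2.2.2.1, q.2.2.2.2, hc.1, hc.2.1, rfl⟩
    · exact mem_roots.2 ⟨q.1, rfl⟩
    · exact sub_mem hk hkn hc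

lemma psi_injOn {n k : ℕ} (hk : 2 ≤ k) (hkn : k + 2 ≤ n) :
    Set.InjOn (psi n k) (Dset n k) := by
  intro q hq q' hq' h
  have hc : Cc n k q := (Finset.mem_filter.1 hq).2
  have hc' : Cc n k q' := (Finset.mem_filter.1 hq').2
  have hroot : rootFn n k q.1 = rootFn n k q'.1 := congrArg Prod.snd h
  have hi : q.1 = q'.1 := root_inj hk hkn hroot
  have hwf : wfun q.2.1 q.2.2.1 q.2.2.2.1 q.2.2.2.2
      = wfun q'.2.1 q'.2.2.1 q'.2.2.2.1 q'.2.2.2.2 := congrArg Prod.fst h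
  obtain ⟨e1, e2, e3, e4⟩ := wfun_inj hc.1 hc.2.1 hc'.1 hc'.2.1 hwf
  obtain ⟨i, a, b, s, t⟩ := q
  obtain ⟨i', a', b', s', t'⟩ := q'
  simp only at hi e1 e2 e3 e4
  rw [hi, e1, e2, e3, e4]

lemma card_lt {n k : ℕ} (h : k ≤ n) :
    (Finset.univ.filter fun a : Fin n => a.val < k).card = k := by
  have h1 : ((Finset.univ.filter fun a : Fin n => a.val < k).image Fin.val).card
      = (Finset.univ.filter fun a : Fin n => a.val < k).card :=
    Finset.card_image_of_injOn Fin.val_injective.injOn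
  have h2 : (Finset.univ.filter fun a : Fin n => a.val < k).image Fin.val
      = Finset.range k := by
    ext m
    simp only [Finset.mem_image, Finset.mem_filter, Finset.mem_univ, true_and,
      Finset.mem_range]
    constructor
    · rintro ⟨a, ha, rfl⟩; exact ha
    · rintro hm; exact ⟨⟨m, lt_of_lt_of_le hm h⟩, hm, rfl⟩
  rw [← h1, h2, Finset.card_range]

lemma card_ge {n k : ℕ} (h : k ≤ n) :
    (Finset.univ.filter fun a : Fin n => k ≤ a.val).card = n - k := by
  have h1 : ((Finset.univ.filter fun a : Fin n => k ≤ a.val).image Fin.val).card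
      = (Finset.univ.filter fun a : Fin n => k ≤ a.val).card :=
    Finset.card_image_of_injOn Fin.val_injective.injOn
  have h2 : (Finset.univ.filter fun a : Fin n => k ≤ a.val).image Fin.val
      = Finset.Ico k n := by
    ext m
    simp only [Finset.mem_image, Finset.mem_filter, Finset.mem_univ, true_and,
      Finset.mem_Ico]
    constructor
    · rintro ⟨a, ha, rfl⟩; exact ⟨ha, a.isLt⟩
    · rintro ⟨hm1, hm2⟩; exact ⟨⟨m, hm2⟩, hm1, rfl⟩
  rw [← h1, h2, Nat.card_Ico]

lemma card_bool2 : (Finset.univ : Finset (Bool × Bool)).card = 4 := by decide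

def Iset (n k : ℕ) : Finset (Fin n × Fin n × Bool × Bool) :=
  Finset.univ.filter (fun r => (r.1.val < k ∧ k ≤ r.2.1.val) ∨ (k ≤ r.1.val ∧ r.2.1.val < k))

lemma card_Iset {n k : ℕ} (hkn : k + 2 ≤ n) : (Iset n k).card = 8 * k * (n - k) := by
  have hsplit : Iset n k
      = ((Finset.univ.filter fun x : Fin n => x.val < k) ×ˢ
          ((Finset.univ.filter fun x : Fin n => k ≤ x.val) ×ˢ
            (Finset.univ : Finset (Bool × Bool)))) ∪
        ((Finset.univ.filter fun x : Fin n => k ≤ x.val) ×ˢ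
          ((Finset.univ.filter fun x : Fin n => x.val < k) ×ˢ
            (Finset.univ : Finset (Bool × Bool)))) := by
    ext r
    simp only [Iset, Finset.mem_filter, Finset.mem_union, Finset.mem_product,
      Finset.mem_univ, true_and, and_true]
  have hdisj : Disjoint
      ((Finset.univ.filter fun x : Fin n => x.val < k) ×ˢ
        ((Finset.univ.filter fun x : Fin n => k ≤ x.val) ×ˢ
          (Finset.univ : Finset (Bool × Bool))))
      ((Finset.univ.filter fun x : Fin n => k ≤ x.val) ×ˢ
        ((Finset.univ.filter fun x : Fin n => x.val < k) ×ˢ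
          (Finset.univ : Finset (Bool × Bool)))) := by
    rw [Finset.disjoint_left]
    intro r hr hr'
    simp only [Finset.mem_product, Finset.mem_filter, Finset.mem_univ, true_and] at hr hr'
    omega
  rw [hsplit, Finset.card_union_of_disjoint hdisj, Finset.card_product, Finset.card_product,
    Finset.card_product, Finset.card_product, card_lt (by omega), card_ge (by omega),
    card_bool2]
  ring

lemma card_Dset {n k : ℕ} (hk : 2 ≤ k) (hkn : k + 2 ≤ n) :
    (Dset n k).card = 8 * k * (n - k) := by
  rw [← card_Iset (n := n) (k := k) hkn]
  refine Finset.card_bij'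
    (fun q _ => (q.1,
      (if q.1.val < k then q.2.2.1 else q.2.1),
      decide ((if q.1.val < k then q.2.1.val else q.2.2.1.val) = q.1.val),
      (if q.1.val < k then q.2.2.2.2 else q.2.2.2.1)))
    (fun r _ => (r.1,
      (if hik : r.1.val < k then
        (if r.1.val + 1 = k then (if r.2.2.1 then r.1 else ⟨k - 2, by omega⟩)
         else (if r.2.2.1 then r.1 else ⟨r.1.val + 1, by omega⟩))
       else r.2.1),
      (if r.1.val < k then r.2.1 else
        (if _h2 : r.1.val + 1 = n then (if r.2.2.1 then r.1 else ⟨n - 2, by omega⟩)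
         else (if r.2.2.1 then r.1 else ⟨r.1.val + 1, by have := r.1.isLt; omega⟩))),
      (if r.1.val < k then (if r.1.val + 1 = k then true else r.2.2.1) else r.2.2.2),
      (if r.1.val < k then r.2.2.2 else (if r.1.val + 1 = n then true else r.2.2.1))))
    ?_ ?_ ?_ ?_
  · -- F maps into Iset
    intro q hq
    have hc : Cc n k q := (Finset.mem_filter.1 hq).2
    obtain ⟨i, a, b, s, t⟩ := q
    obtain ⟨ha, hb, -⟩ := hc
    simp only at ha hb
    refine Finset.mem_filter.2 ⟨Finset.mem_univ _, ?_⟩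
    simp only
    by_cases hik : i.val < k
    · rw [if_pos hik]; exact Or.inl ⟨hik, hb⟩
    · rw [if_neg hik]; exact Or.inr ⟨by omega, ha⟩
  · -- G maps into Dset
    intro r hr
    have hcr := (Finset.mem_filter.1 hr).2
    obtain ⟨i, c, d, u⟩ := r
    simp only at hcr ⊢
    refine Finset.mem_filter.2 ⟨Finset.mem_univ _, ?_⟩
    have hi := i.isLt
    by_cases hik : i.val < k
    · have hc2 : k ≤ c.val := by omega
      rw [dif_pos hik, if_pos hik, if_pos hik, if_pos hik]
      by_cases h1 : i.val + 1 = k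
      · rw [if_pos h1, if_pos h1]
        refine ⟨?_, hc2, ?_⟩
        · cases d
          · simp only [Bool.false_eq_true, if_false, Fin.val_mk]; omega
          · simp only [if_true]; omega
        · rw [if_pos h1]
          refine ⟨rfl, ?_⟩
          cases d
          · simp only [Bool.false_eq_true, if_false, Fin.val_mk]; omega
          · simp only [if_true]; omega
      · rw [if_neg h1, if_neg h1]
        refine ⟨?_, hc2, ?_⟩
        · cases d
          · simp only [Bool.false_eq_true, if_false, Fin.val_mk]; omega
          · simp only [if_true]; omega
        · rw [if_neg h1, if_neg (show ¬ (i.val + 1 = n) by omega),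
            if_pos (show i.val + 1 < k by omega)]
          cases d
          · exact Or.inr ⟨by simp only [Bool.false_eq_true, if_false, Fin.val_mk], rfl⟩
          · exact Or.inl ⟨by simp only [if_true], rfl⟩
    · have hc1 : c.val < k := by omega
      rw [dif_neg hik, if_neg hik, if_neg hik, if_neg hik]
      by_cases h2 : i.val + 1 = n
      · rw [dif_pos h2, if_pos h2]
        refine ⟨hc1, ?_, ?_⟩
        · cases d
          · simp only [Bool.false_eq_true, if_false, Fin.val_mk]; omega
          · simp only [if_true]; omega
        · rw [if_neg (show ¬ (i.val + 1 = k) by omega), if_pos h2]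
          refine ⟨rfl, ?_⟩
          cases d
          · simp only [Bool.false_eq_true, if_false, Fin.val_mk]; omega
          · simp only [if_true]; omega
      · rw [dif_neg h2, if_neg h2]
        refine ⟨hc1, ?_, ?_⟩
        · cases d
          · simp only [Bool.false_eq_true, if_false, Fin.val_mk]; omega
          · simp only [if_true]; omega
        · rw [if_neg (show ¬ (i.val + 1 = k) by omega), if_neg h2,
            if_neg (show ¬ (i.val + 1 < k) by omega)]
          cases d
          · exact Or.inr ⟨by simp only [Bool.false_eq_true, if_false, Fin.val_mk], rfl⟩
          · exact Or.inl ⟨by simp only [if_true], rfl⟩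
  · -- G ∘ F = id
    intro q hq
    have hc : Cc n k q := (Finset.mem_filter.1 hq).2
    obtain ⟨i, a, b, s, t⟩ := q
    obtain ⟨ha, hb, h3⟩ := hc
    simp only at ha hb h3 ⊢
    have hi := i.isLt
    simp only [Prod.mk.injEq]
    by_cases hik : i.val < k
    · rw [if_pos hik, if_pos hik, if_pos hik, dif_pos hik, if_pos hik, if_pos hik, if_pos hik]
      refine ⟨trivial, ?_, rfl, ?_, rfl⟩
      · -- a-component
        by_cases h1 : i.val + 1 = k
        · rw [if_pos h1] at h3 ⊢
          obtain ⟨hs, hor⟩ := h3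
          rcases hor with h | h
          · rw [decide_eq_false (show ¬ (a.val = i.val) by omega)]
            simp only [Bool.false_eq_true, if_false]
            exact Fin.ext (by simp only [Fin.val_mk]; omega) |>.symm
          · rw [decide_eq_true (show a.val = i.val by omega)]
            simp only [if_true]
            exact (Fin.ext (by omega)).symm
        · rw [if_neg h1, if_neg (show ¬ (i.val + 1 = n) by omega),
            if_pos (show i.val + 1 < k by omega)] at h3
          rw [if_neg h1]
          rcases h3 with ⟨hai, hs⟩ | ⟨hai, hs⟩
          · rw [decide_eq_true hai]
            simp only [if_true]
            exact (Fin.ext hai).symm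
          · rw [decide_eq_false (show ¬ (a.val = i.val) by omega)]
            simp only [Bool.false_eq_true, if_false]
            exact Fin.ext (by simp only [Fin.val_mk]; omega) |>.symm
      · -- s-component
        by_cases h1 : i.val + 1 = k
        · rw [if_pos h1] at h3
          rw [if_pos h1]
          exact h3.1.symm
        · rw [if_neg h1, if_neg (show ¬ (i.val + 1 = n) by omega),
            if_pos (show i.val + 1 < k by omega)] at h3
          rw [if_neg h1]
          rcases h3 with ⟨hai, hs⟩ | ⟨hai, hs⟩
          · rw [decide_eq_true hai, hs]
          · rw [decide_eq_false (show ¬ (a.val = i.val) by omega), hs]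
    · rw [if_neg hik, if_neg hik, if_neg hik, dif_neg hik, if_neg hik, if_neg hik, if_neg hik]
      rw [if_neg (show ¬ (i.val + 1 = k) by omega)] at h3
      refine ⟨trivial, rfl, ?_, rfl, ?_⟩
      · -- b-component
        by_cases h2 : i.val + 1 = n
        · rw [if_pos h2] at h3
          obtain ⟨ht, hor⟩ := h3
          rw [dif_pos h2]
          rcases hor with h | h
          · rw [decide_eq_false (show ¬ (b.val = i.val) by omega)]
            simp only [Bool.false_eq_true, if_false]
            exact Fin.ext (by simp only [Fin.val_mk]; omega) |>.symm
          · rw [decide_eq_true (show b.val = i.val by omega)]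
            simp only [if_true]
            exact (Fin.ext (by omega)).symm
        · rw [if_neg h2, if_neg (show ¬ (i.val + 1 < k) by omega)] at h3
          rw [dif_neg h2]
          rcases h3 with ⟨hbi, ht⟩ | ⟨hbi, ht⟩
          · rw [decide_eq_true hbi]
            simp only [if_true]
            exact (Fin.ext hbi).symm
          · rw [decide_eq_false (show ¬ (b.val = i.val) by omega)]
            simp only [Bool.false_eq_true, if_false]
            exact Fin.ext (by simp only [Fin.val_mk]; omega) |>.symm
      · -- t-component
        by_cases h2 : i.val + 1 = n
        · rw [if_pos h2] at h3
          rw [if_pos h2]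
          exact h3.1.symm
        · rw [if_neg h2, if_neg (show ¬ (i.val + 1 < k) by omega)] at h3
          rw [if_neg h2]
          rcases h3 with ⟨hbi, ht⟩ | ⟨hbi, ht⟩
          · rw [decide_eq_true hbi, ht]
          · rw [decide_eq_false (show ¬ (b.val = i.val) by omega), ht]
  · -- F ∘ G = id
    intro r hr
    have hcr := (Finset.mem_filter.1 hr).2
    obtain ⟨i, c, d, u⟩ := r
    simp only at hcr ⊢
    have hi := i.isLt
    simp only [Prod.mk.injEq]
    by_cases hik : i.val < k
    · refine ⟨trivial, ?_, ?_, ?_⟩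
      · rw [if_pos hik, if_pos hik]
      · rw [if_pos hik, dif_pos hik]
        by_cases h1 : i.val + 1 = k
        · rw [if_pos h1]
          cases d
          · simp only [Bool.false_eq_true, if_false, Fin.val_mk]
            exact decide_eq_false (by omega)
          · simp only [if_true]
            exact decide_eq_true trivial
        · rw [if_neg h1]
          cases d
          · simp only [Bool.false_eq_true, if_false, Fin.val_mk]
            exact decide_eq_false (by omega)
          · simp only [if_true]
            exact decide_eq_true trivial
      · rw [if_pos hik, if_pos hik]
    · refine ⟨trivial, ?_, ?_, ?_⟩
      · rw [if_neg hik, dif_neg hik]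
      · rw [if_neg hik, if_neg hik]
        by_cases h2 : i.val + 1 = n
        · rw [dif_pos h2]
          cases d
          · simp only [Bool.false_eq_true, if_false, Fin.val_mk]
            exact decide_eq_false (by omega)
          · simp only [if_true]
            exact decide_eq_true trivial
        · rw [dif_neg h2]
          cases d
          · simp only [Bool.false_eq_true, if_false, Fin.val_mk]
            exact decide_eq_false (by omega)
          · simp only [if_true]
            exact decide_eq_true trivial
      · rw [if_neg hik, if_neg hik]

lemma card_gOne {n k : ℕ} (hkn : k + 2 ≤ n) :
    (gOneDn n k).card = 4 * k * (n - k) := by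
  have hinj : Set.InjOn
      (fun q : Fin n × Fin n × Bool × Bool => fun j =>
        (if j = q.1 then (if q.2.2.1 then (1 : ℤ) else -1) else 0) +
        (if j = q.2.1 then (if q.2.2.2 then 1 else -1) else 0))
      ↑(Finset.univ.filter
        (fun q : Fin n × Fin n × Bool × Bool => q.1.val < k ∧ k ≤ q.2.1.val)) := by
    intro q hq q' hq' h
    simp only [Finset.coe_filter, Set.mem_setOf_eq] at hq hq'
    obtain ⟨e1, e2, e3, e4⟩ := wfun_inj hq.2.1 hq.2.2 hq'.2.1 hq'.2.2 h
    obtain ⟨a, b, s, t⟩ := q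
    obtain ⟨a', b', s', t'⟩ := q'
    simp only at e1 e2 e3 e4
    rw [e1, e2, e3, e4]
  rw [gOneDn, Finset.card_image_of_injOn hinj]
  have hprod : (Finset.univ.filter
      (fun q : Fin n × Fin n × Bool × Bool => q.1.val < k ∧ k ≤ q.2.1.val))
      = (Finset.univ.filter fun x : Fin n => x.val < k) ×ˢ
        ((Finset.univ.filter fun x : Fin n => k ≤ x.val) ×ˢ
          (Finset.univ : Finset (Bool × Bool))) := by
    ext r
    simp only [Finset.mem_filter, Finset.mem_product, Finset.mem_univ, true_and, and_true]
  rw [hprod, Finset.card_product, Finset.card_product, card_lt (by omega), card_ge (by omega),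
    card_bool2]
  ring

end Z2DnAux

/-- For the `ℤ₂`-grading of `so_{2n}` (type `D_n`) obtained by coloring the vertex
`α_k` (`2 ≤ k ≤ n−2`) of the extended Dynkin diagram, where
`g₀ = so_{2k} × so_{2(n−k)}` and `g₁` is the tensor product of the two tautological
representations: `dim g₁ = 4k(n−k)`, `#E₁ = 8k(n−k)`, and `2·dim g₁ = #E₁`. -/
theorem Z2_grading_Dn (n k : ℕ) (hk : 2 ≤ k) (hkn : k + 2 ≤ n) :
    (gOneDn n k).card = 4 * k * (n - k) ∧
    (edgesOneDn n k).card = 8 * k * (n - k) ∧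
    2 * (gOneDn n k).card = (edgesOneDn n k).card := by
  have h1 : (gOneDn n k).card = 4 * k * (n - k) := Z2DnAux.card_gOne hkn
  have h2 : (edgesOneDn n k).card = 8 * k * (n - k) := by
    rw [Z2DnAux.edges_eq_image hk hkn,
      Finset.card_image_of_injOn (Z2DnAux.psi_injOn hk hkn),
      Z2DnAux.card_Dset hk hkn]
  refine ⟨h1, h2, ?_⟩
  rw [h1, h2]
  ring
end
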